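/- arXiv:0905.1992 — 5 statements merged into one kernel-verified Lean document; each statement's English description precedes it below -/
import Mathlib

section
/- For every n ≥ 1 and every k ≥ 0, the k-th elementary symmetric polynomial in n variables evaluated at the Jucys–Murphy elements satisfies e_k(J_1,…,J_n) = Σ_{σ ∈ S(n), #(σ) = n−k} σ in ℚ[S(n)]; equivalently, e_k(J_1,…,J_n) = Σ_{μ : |μ| = k} c_μ(n), and in particular e_k(J_1,…,J_n) = 0 for k ≥ n. -/
/-!
Expanding `e_k` turns `e_k(J_1, …, J_n)` into the sum, over `k`-subsets `A`, of the products of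
the `J_a`, `a ∈ A`, in increasing order. Since `J_t = Σ_{s < t} (s t)`, the Pascal recursion for
`k`-subsets of `{1, …, t}` is matched by a recursion for the permutations supported in `{1, …, t}`
with `n - #(σ) = k`: those fixing `t` are supported in `{1, …, t - 1}`, and those moving `t` factor
uniquely as `τ (s t)` with `τ` supported in `{1, …, t - 1}` and `s = σ⁻¹ t < t`. Multiplying `τ`
on the right by `(s t)` inserts its fixed point `t` into the cycle of `s`, so it removes one cycle.
-/

/- The group algebra ℚ[S(n)] -/
noncomputable section
open scoped Classical

abbrev GA (n : ℕ) := MonoidAlgebra ℚ (Equiv.Perm (Fin n))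

/-- The Jucys–Murphy element `J_{i+1} = (1,i+1) + ⋯ + (i,i+1)` (zero-based index `i`),
so that `JM n 0 = J_1 = 0`. -/
def JM (n : ℕ) (i : Fin n) : GA n :=
  ∑ s ∈ Finset.univ.filter (fun s => s < i), MonoidAlgebra.single (Equiv.swap s i) (1 : ℚ)

/-- Evaluation of a (commutative) polynomial at the commuting family of Jucys–Murphy
elements `J_1, …, J_n`: each monomial is evaluated as the product `J_1^{m 1} ⋯ J_n^{m n}`
taken in the natural order of the indices. -/
def evalJM {n : ℕ} (f : MvPolynomial (Fin n) ℚ) : GA n :=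
  (AddMonoidAlgebra.coeff f).sum fun m c => c • ((List.finRange n).map (fun i => JM n i ^ m i)).prod

/-- The number of cycles of a permutation, counting fixed points. -/
def cycleCount {n : ℕ} (σ : Equiv.Perm (Fin n)) : ℕ :=
  σ.cycleType.card + (Finset.univ.filter (fun x => σ x = x)).card

/-- The reduced cycle type: subtract one from each part of the cycle type
(and fixed points, which are not parts of `Equiv.Perm.cycleType`, disappear). -/
def reducedCycleType {n : ℕ} (σ : Equiv.Perm (Fin n)) : Multiset ℕ :=
  σ.cycleType.map (· - 1)

/-- `e_k(J_1, …, J_n)`, the `k`-th elementary symmetric polynomial in `n` variables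
evaluated at the Jucys–Murphy elements. -/
def eEval (n k : ℕ) : GA n := evalJM (MvPolynomial.esymm (Fin n) ℚ k)

/-- `c_μ(n)`: the sum in ℚ[S(n)] of all permutations of reduced cycle type `μ`. -/
def cClass (n : ℕ) (μ : Multiset ℕ) : GA n :=
  ∑ σ ∈ Finset.univ.filter (fun σ : Equiv.Perm (Fin n) => reducedCycleType σ = μ),
    MonoidAlgebra.single σ (1 : ℚ)

open Finset

namespace Equiv.Perm

variable {α : Type*} [Fintype α] [DecidableEq α]

-- `n - #(σ)`, the size of the reduced cycle type of `σ`.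
def absLength (σ : Perm α) : ℕ := (σ.cycleType.map (· - 1)).sum

lemma absLength_add_card_cycleType (σ : Perm α) :
    σ.absLength + Multiset.card σ.cycleType = #σ.support := by
  calc σ.absLength + Multiset.card σ.cycleType = (σ.cycleType.map fun i => i - 1 + 1).sum := by
        simp [absLength, Multiset.sum_map_add]
    _ = σ.cycleType.sum := by
        rw [Multiset.map_congr rfl fun i hi => Nat.sub_add_cancel (one_lt_of_mem_cycleType hi).le,
          Multiset.map_id']
    _ = #σ.support := sum_cycleType σ

lemma card_cycleType_le_absLength (σ : Perm α) : Multiset.card σ.cycleType ≤ σ.absLength := by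
  have := Multiset.card_nsmul_le_sum (s := σ.cycleType.map (· - 1)) (a := 1) (by
    simp only [Multiset.mem_map]
    rintro _ ⟨i, hi, rfl⟩
    exact Nat.le_sub_of_add_le (two_le_of_mem_cycleType hi))
  simpa [absLength] using this

lemma absLength_eq_zero_iff {σ : Perm α} : σ.absLength = 0 ↔ σ = 1 := by
  refine ⟨fun h => card_cycleType_eq_zero.mp ?_, fun h => by simp [h, absLength]⟩
  have := card_cycleType_le_absLength σ
  omega

lemma absLength_lt_card [Nonempty α] (σ : Perm α) : σ.absLength < Fintype.card α := by
  rcases eq_or_ne σ 1 with rfl | hσ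
  · simpa [absLength] using Fintype.card_pos
  · have := absLength_add_card_cycleType σ
    have := card_cycleType_pos.mpr hσ
    have := card_le_univ σ.support
    omega

lemma absLength_conj (σ τ : Perm α) : (τ * σ * τ⁻¹).absLength = σ.absLength := by
  rw [absLength, cycleType_conj, absLength]

lemma Disjoint.absLength_mul {σ τ : Perm α} (h : σ.Disjoint τ) :
    (σ * τ).absLength = σ.absLength + τ.absLength := by
  simp [absLength, h.cycleType_mul]

lemma IsCycle.absLength {c : Perm α} (hc : c.IsCycle) : c.absLength = #c.support - 1 := by
  simp [Perm.absLength, hc.cycleType]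

lemma IsCycle.absLength_swap_mul {c : Perm α} (hc : c.IsCycle) {x : α} (hx : c x ≠ x) :
    (swap x (c x) * c).absLength + 1 = c.absLength := by
  by_cases hcc : c (c x) = x
  · rw [hc.eq_swap_of_apply_apply_eq_self hx hcc, swap_apply_left, swap_mul_self,
      (isCycle_swap hx.symm).absLength, card_support_swap hx.symm]
    simp [Perm.absLength]
  · have hx' : x ∈ c.support := mem_support.mpr hx
    rw [(hc.swap_mul hx hcc).absLength, hc.absLength, support_swap_mul_eq c x hcc,
      sdiff_singleton_eq_erase, card_erase_of_mem hx']
    have := hc.two_le_card_support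
    omega

lemma absLength_swap_mul {σ : Perm α} {x : α} (hx : σ x ≠ x) :
    (swap x (σ x) * σ).absLength + 1 = σ.absLength := by
  set c := σ.cycleOf x
  have hc : c.IsCycle := isCycle_cycleOf σ hx
  have hcx : c x = σ x := cycleOf_apply_self σ x
  have hxc : x ∈ c.support := mem_support.mpr (hcx ▸ hx)
  have hcσ : c ∈ σ.cycleFactorsFinset := cycleOf_mem_cycleFactorsFinset_iff.mpr (mem_support.mpr hx)
  have hdisj : c.Disjoint (σ * c⁻¹) := (disjoint_mul_inv_of_mem_cycleFactorsFinset hcσ).symm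
  have hsupp : (swap x (c x) * c).support ≤ c.support := by
    refine (support_mul_le _ _).trans (sup_le ?_ le_rfl)
    rw [support_swap (hcx ▸ hx).symm]
    exact insert_subset hxc (singleton_subset_iff.mpr (apply_mem_support.mpr hxc))
  have hσ : σ = c * (σ * c⁻¹) := by rw [hdisj.commute.eq, inv_mul_cancel_right]
  set ρ := σ * c⁻¹
  rw [← hcx, hσ, ← mul_assoc, (hdisj.mono hsupp le_rfl).absLength_mul, hdisj.absLength_mul,
    ← hc.absLength_swap_mul (hcx ▸ hx)]
  ring

lemma absLength_mul_swap {τ : Perm α} {s t : α} (hst : s ≠ t) (ht : τ t = t) :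
    (τ * swap s t).absLength = τ.absLength + 1 := by
  have hs : (τ * swap s t) s = t := by simp [ht]
  have key := absLength_swap_mul (σ := τ * swap s t) (x := s) (by rw [hs]; exact hst.symm)
  have hconj : swap s t * (τ * swap s t) = swap s t * τ * (swap s t)⁻¹ := by
    rw [swap_inv, mul_assoc]
  rw [hs, hconj, absLength_conj] at key
  omega

lemma support_subset_of_subset_insert {σ : Perm α} {S : Finset α} {t : α}
    (h : σ.support ⊆ insert t S) (ht : σ t = t) : σ.support ⊆ S := by
  intro x hx
  have hxt : x ≠ t := by rintro rfl; exact mem_support.mp hx ht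
  simpa [hxt] using h hx

lemma support_mul_swap_subset (τ : Perm α) (s t : α) :
    (τ * swap s t).support ⊆ insert s (insert t τ.support) := by
  intro x hx
  by_cases hs : x = s
  · simp [hs]
  by_cases ht : x = t
  · simp [ht]
  simp_all [mem_support, swap_apply_of_ne_of_ne hs ht]

lemma mul_swap_of_support_subset {τ : Perm α} {S : Finset α} {s t : α} (hτ : τ.support ⊆ S)
    (hs : s ∈ S) (ht : t ∉ S) :
    (τ * swap s t).support ⊆ insert t S ∧ (τ * swap s t) t ≠ t ∧
      (τ * swap s t).absLength = τ.absLength + 1 := by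
  have hst : s ≠ t := by rintro rfl; exact ht hs
  have hτt : τ t = t := notMem_support.mp fun h => ht (hτ h)
  refine ⟨(support_mul_swap_subset τ s t).trans ?_, ?_, absLength_mul_swap hst hτt⟩
  · exact insert_subset (mem_insert_of_mem hs) (insert_subset_insert t hτ)
  · rw [mul_apply, swap_apply_right]
    exact fun h => hst (τ.injective (h.trans hτt.symm))

lemma mul_swap_inv_apply_of_support_subset_insert {σ : Perm α} {S : Finset α} {t : α}
    (hσ : σ.support ⊆ insert t S) (hσt : σ t ≠ t) :
    σ⁻¹ t ∈ S ∧ (σ * swap (σ⁻¹ t) t).support ⊆ S ∧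
      (σ * swap (σ⁻¹ t) t).absLength + 1 = σ.absLength := by
  set s := σ⁻¹ t
  have hσs : σ s = t := σ.apply_symm_apply t
  have hst : s ≠ t := by rintro hs; exact hσt (hs ▸ hσs)
  have hs : s ∈ S := by simpa [hst] using hσ (mem_support.mpr (hσs.trans_ne hst.symm))
  have hτt : (σ * swap s t) t = t := by rw [mul_apply, swap_apply_right, hσs]
  have hτ : (σ * swap s t).support ⊆ insert t S :=
    (support_mul_swap_subset σ s t).trans
      (insert_subset (mem_insert_of_mem hs) (insert_subset (mem_insert_self t S) hσ))
  have hlen := absLength_mul_swap hst hτt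
  rw [mul_assoc, swap_mul_self, mul_one] at hlen
  exact ⟨hs, support_subset_of_subset_insert hτ hτt, hlen.symm⟩

end Equiv.Perm

section PermSum

open Equiv Equiv.Perm MonoidAlgebra

variable (R : Type*) [Semiring R] {α : Type*} [Fintype α] [DecidableEq α]

def permSum (S : Finset α) (k : ℕ) : MonoidAlgebra R (Perm α) :=
  ∑ σ ∈ univ.filter (fun σ : Perm α => σ.support ⊆ S ∧ σ.absLength = k), single σ 1

lemma permSum_zero (S : Finset α) : permSum R S 0 = 1 := by
  have : univ.filter (fun σ : Perm α => σ.support ⊆ S ∧ σ.absLength = 0) = {1} := by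
    ext σ
    simp +contextual [absLength_eq_zero_iff]
  rw [permSum, this, sum_singleton, MonoidAlgebra.one_def]

lemma permSum_empty_succ (k : ℕ) : permSum R (∅ : Finset α) (k + 1) = 0 := by
  refine sum_eq_zero fun σ hσ => ?_
  obtain ⟨hσ, hk⟩ := (mem_filter.mp hσ).2
  rw [subset_empty, support_eq_empty_iff] at hσ
  simp [hσ, absLength] at hk

lemma permSum_insert {S : Finset α} {t : α} (ht : t ∉ S) (k : ℕ) :
    permSum R (insert t S) (k + 1) =
      permSum R S (k + 1) + permSum R S k * ∑ s ∈ S, single (swap s t) 1 := by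
  rw [permSum, ← sum_filter_add_sum_filter_not _ (fun σ : Perm α => σ t = t)]
  congr 1
  · refine sum_congr (ext fun σ => ?_) fun _ _ => rfl
    simp only [mem_filter, mem_univ, true_and]
    constructor
    · rintro ⟨⟨hσ, hk⟩, hσt⟩
      exact ⟨support_subset_of_subset_insert hσ hσt, hk⟩
    · rintro ⟨hσ, hk⟩
      exact ⟨⟨hσ.trans (subset_insert t S), hk⟩, notMem_support.mp fun h => ht (hσ h)⟩
  · rw [permSum, sum_mul_sum, ← sum_product']
    simp_rw [single_mul_single, one_mul]
    symm
    refine sum_nbij' (fun p => p.1 * swap p.2 t) (fun σ => (σ * swap (σ⁻¹ t) t, σ⁻¹ t))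
      ?_ ?_ ?_ ?_ fun _ _ => rfl
    · simp only [mem_product, mem_filter, mem_univ, true_and]
      rintro ⟨τ, s⟩ ⟨⟨hτ, rfl⟩, hs⟩
      obtain ⟨hσ, hσt, hlen⟩ := mul_swap_of_support_subset hτ hs ht
      exact ⟨⟨hσ, hlen⟩, hσt⟩
    · simp only [mem_product, mem_filter, mem_univ, true_and]
      rintro σ ⟨⟨hσ, hk⟩, hσt⟩
      obtain ⟨hs, hτ, hlen⟩ := mul_swap_inv_apply_of_support_subset_insert hσ hσt
      exact ⟨⟨hτ, by omega⟩, hs⟩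
    · simp only [mem_product, mem_filter, mem_univ, true_and]
      rintro ⟨τ, s⟩ ⟨⟨hτ, -⟩, -⟩
      have hτt : τ t = t := notMem_support.mp fun h => ht (hτ h)
      have hinv : (τ * swap s t)⁻¹ t = s := by
        rw [inv_eq_iff_eq, mul_apply, swap_apply_left, hτt]
      simp only [hinv, mul_assoc, swap_mul_self, mul_one]
    · intro σ _
      simp only [mul_assoc, swap_mul_self, mul_one]

end PermSum

lemma List.prod_map_ite_one {α M : Type*} [Monoid M] (p : α → Prop) [DecidablePred p]
    (f : α → M) (l : List α) :
    (l.map fun a => if p a then f a else 1).prod = ((l.filter p).map f).prod := by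
  induction l with
  | nil => rfl
  | cons a l ih => by_cases h : p a <;> simp [h, ih]

lemma Finset.sum_powersetCard_succ_insert {α M : Type*} [DecidableEq α] [AddCommMonoid M]
    {s : Finset α} {x : α} (hx : x ∉ s) (k : ℕ) (f : Finset α → M) :
    ∑ A ∈ powersetCard (k + 1) (insert x s), f A =
      ∑ A ∈ powersetCard (k + 1) s, f A + ∑ A ∈ powersetCard k s, f (insert x A) := by
  have hdisj : Disjoint (powersetCard (k + 1) s) ((powersetCard k s).image (insert x)) :=
    disjoint_left.mpr fun A hA hA' => by
      obtain ⟨B, -, rfl⟩ := mem_image.mp hA'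
      exact hx ((mem_powersetCard.mp hA).1 (mem_insert_self x B))
  have hinj : Set.InjOn (insert x) (powersetCard k s : Set (Finset α)) := fun A hA B hB hAB => by
    have hxA : x ∉ A := fun h => hx ((mem_powersetCard.mp hA).1 h)
    have hxB : x ∉ B := fun h => hx ((mem_powersetCard.mp hB).1 h)
    rw [← erase_insert hxA, hAB, erase_insert hxB]
  rw [powersetCard_succ_insert hx, sum_union hdisj, sum_image hinj]

section JucysMurphy

open Equiv MonoidAlgebra

variable {n : ℕ}

def prodJM (A : Finset (Fin n)) : GA n :=
  (((List.finRange n).filter (· ∈ A)).map (JM n)).prod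

lemma evalJM_esymm (k : ℕ) :
    evalJM (MvPolynomial.esymm (Fin n) ℚ k) = ∑ A ∈ powersetCard k univ, prodJM A := by
  have hlin : ∀ f : MvPolynomial (Fin n) ℚ, evalJM f = Finsupp.linearCombination ℚ
      (fun m : Fin n →₀ ℕ => ((List.finRange n).map fun i => JM n i ^ m i).prod)
      (AddMonoidAlgebra.coeff f) := fun f => rfl
  rw [hlin, MvPolynomial.esymm_eq_sum_monomial, AddMonoidAlgebra.coeff_sum, map_sum]
  refine sum_congr rfl fun A _ => ?_
  have hcoeff : AddMonoidAlgebra.coeff (MvPolynomial.monomial (∑ i ∈ A, Finsupp.single i 1) (1 : ℚ))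
      = Finsupp.single (∑ i ∈ A, Finsupp.single i 1) 1 := rfl
  have hexp : ∀ i, (∑ j ∈ A, Finsupp.single j 1 : Fin n →₀ ℕ) i = if i ∈ A then 1 else 0 := by
    intro i
    simp [Finsupp.single_apply]
  rw [hcoeff, Finsupp.linearCombination_single, one_smul, prodJM]
  simp only [hexp, pow_ite, pow_one, pow_zero]
  exact List.prod_map_ite_one _ _ _

lemma prodJM_insert {A : Finset (Fin n)} {t : Fin n} (hA : ∀ a ∈ A, a < t) :
    prodJM (insert t A) = prodJM A * JM n t := by
  have hsplit : (List.finRange n).filter (· ∈ insert t A) =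
      (List.finRange n).filter (· ∈ A) ++ [t] := by
    refine ((List.pairwise_lt_finRange n).filter _).eq_of_mem_iff ?_ fun a => ?_
    · exact List.pairwise_append.mpr ⟨(List.pairwise_lt_finRange n).filter _,
        List.pairwise_singleton _ _, by simpa using hA⟩
    · simp [or_comm]
  rw [prodJM, hsplit, List.map_append, List.prod_append, prodJM]
  simp

lemma sum_powersetCard_prodJM_eq_permSum {b : ℕ} (hb : b ≤ n) (k : ℕ) :
    ∑ A ∈ powersetCard k (univ.filter fun i : Fin n => (i : ℕ) < b), prodJM A =
      permSum ℚ (univ.filter fun i : Fin n => (i : ℕ) < b) k := by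
  have hzero (S : Finset (Fin n)) : ∑ A ∈ powersetCard 0 S, prodJM A = permSum ℚ S 0 := by
    simp [prodJM, permSum_zero]
  induction b generalizing k with
  | zero =>
    obtain _ | k := k
    · exact hzero _
    · have hempty : univ.filter (fun i : Fin n => (i : ℕ) < 0) = ∅ := by simp
      rw [hempty, permSum_empty_succ, powersetCard_eq_empty.mpr (by simp), sum_empty]
  | succ b ih =>
    obtain _ | k := k
    · exact hzero _
    set S := univ.filter fun i : Fin n => (i : ℕ) < b
    set t : Fin n := ⟨b, hb⟩
    have hS : univ.filter (fun i : Fin n => (i : ℕ) < b + 1) = insert t S := by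
      ext i
      simp only [mem_filter, mem_univ, true_and, mem_insert, Fin.ext_iff, S, t]
      omega
    have ht : t ∉ S := by simp [S, t]
    have hJM : JM n t = ∑ s ∈ S, single (swap s t) 1 := rfl
    have hprod : ∀ A ∈ powersetCard k S, prodJM (insert t A) = prodJM A * JM n t :=
      fun A hA => prodJM_insert fun a ha => by
        simpa [S, t, Fin.lt_def] using (mem_powersetCard.mp hA).1 ha
    rw [hS, sum_powersetCard_succ_insert ht, permSum_insert ℚ ht, sum_congr rfl hprod, ← sum_mul,
      ih (by omega), ih (by omega), hJM]

end JucysMurphy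

lemma cycleCount_add_absLength {n : ℕ} (σ : Equiv.Perm (Fin n)) :
    cycleCount σ + σ.absLength = n := by
  have hfix : #(univ.filter fun x => σ x = x) = #σ.supportᶜ := by
    congr 1
    ext x
    simp
  rw [card_compl, Fintype.card_fin] at hfix
  have := σ.absLength_add_card_cycleType
  have := card_le_univ σ.support
  simp only [Fintype.card_fin] at this
  rw [cycleCount, hfix]
  omega

lemma sum_cClass_eq_sum_absLength (n k : ℕ) :
    ∑ μ : Nat.Partition k, cClass n μ.parts =
      ∑ σ ∈ univ.filter (fun σ : Equiv.Perm (Fin n) => σ.absLength = k),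
        MonoidAlgebra.single σ 1 := by
  have hdisj : (↑(univ : Finset (Nat.Partition k)) : Set (Nat.Partition k)).PairwiseDisjoint
      fun μ => univ.filter fun σ : Equiv.Perm (Fin n) => reducedCycleType σ = μ.parts :=
    fun μ _ ν _ hne => disjoint_filter.mpr fun σ _ hμ hν => hne (Nat.Partition.ext (hμ ▸ hν))
  simp only [cClass]
  rw [← sum_biUnion hdisj]
  refine sum_congr (ext fun σ => ?_) fun _ _ => rfl
  simp only [mem_biUnion, mem_univ, mem_filter, true_and]
  constructor
  · rintro ⟨μ, hμ⟩
    rw [Equiv.Perm.absLength, ← reducedCycleType, hμ, μ.parts_sum]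
  · intro hσ
    refine ⟨⟨reducedCycleType σ, fun {i} hi => ?_, hσ⟩, rfl⟩
    obtain ⟨j, hj, rfl⟩ := Multiset.mem_map.mp hi
    have := Equiv.Perm.two_le_of_mem_cycleType hj
    omega

/-- Jucys' theorem: `e_k(J_1,…,J_n) = Σ_{σ : #(σ) = n − k} σ = Σ_{|μ| = k} c_μ(n)`,
and in particular `e_k(J_1,…,J_n) = 0` for `k ≥ n`. -/
theorem elementary_symmetric_in_JM_eq_class_sums (n k : ℕ) (hn : 1 ≤ n) :
    (eEval n k =
      ∑ σ ∈ Finset.univ.filter (fun σ : Equiv.Perm (Fin n) => cycleCount σ + k = n),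
        MonoidAlgebra.single σ (1 : ℚ)) ∧
    (eEval n k = ∑ μ : Nat.Partition k, cClass n μ.parts) ∧
    (n ≤ k → eEval n k = 0) := by
  have hS : univ.filter (fun i : Fin n => (i : ℕ) < n) = univ :=
    filter_true_of_mem fun i _ => i.isLt
  have hperm : eEval n k = ∑ σ ∈ univ.filter (fun σ : Equiv.Perm (Fin n) => σ.absLength = k),
      MonoidAlgebra.single σ 1 := by
    rw [eEval, evalJM_esymm, ← hS, sum_powersetCard_prodJM_eq_permSum le_rfl, hS, permSum]
    simp only [subset_univ, true_and]
  refine ⟨?_, hperm.trans (sum_cClass_eq_sum_absLength n k).symm, fun hk => ?_⟩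
  · rw [hperm]
    refine sum_congr (filter_congr fun σ _ => ?_) fun _ _ => rfl
    have := cycleCount_add_absLength σ
    omega
  · rw [hperm]
    refine sum_eq_zero fun σ hσ => absurd (mem_filter.mp hσ).2 ?_
    have : Nonempty (Fin n) := Fin.pos_iff_nonempty.mp hn
    have := σ.absLength_lt_card
    simp only [Fintype.card_fin] at this
    omega
end
end

section
/- For every n ≥ 1 and every scalar z, the identity (z + J_1)(z + J_2)⋯(z + J_n) = Σ_{σ ∈ S(n)} z^{#(σ)} σ holds in ℚ[S(n)] (equivalently, it holds as an identity of polynomials in an indeterminate z with coefficients in ℚ[S(n)]). -/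
/-!
Write `S(k) ⊆ S(n)` for the permutations fixing `k, …, n - 1`. By induction on `k`,
`(z + J_1)⋯(z + J_k) = Σ_{σ ∈ S(k)} z^{#_k(σ)} σ`, where `#_k(σ)` counts the cycles of `σ` on
`{0, …, k - 1}`. Multiplying by `z` raises every exponent by one, accounting for the new fixed
point `k`. Multiplying by `J_{k+1} = Σ_{s < k} (s, k)` gives `Σ σ (s, k)`, and
`(σ, s) ↦ σ (s, k)` is a bijection from `S(k) × {s < k}` onto `S(k+1) ∖ S(k)`; since `σ (s, k)`
inserts `k` into the cycle of `s`, it has the same number of cycles on `{0, …, k}` as `σ` has on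
`{0, …, k - 1}`.
-/

noncomputable section
open scoped Classical

open Finset

namespace Equiv.Perm

variable {α : Type*} [DecidableEq α] [Fintype α] {σ : Perm α} {a b : α}

theorem cycleOf_apply_of_apply_eq_self (hb : σ b = b) : σ.cycleOf a b = b := by
  rw [cycleOf_apply]
  split_ifs <;> simp [hb]

theorem mul_inv_cycleOf_apply_of_sameCycle {x : α} (hx : σ.SameCycle a x) :
    (σ * (σ.cycleOf a)⁻¹) x = x := by
  rw [mul_apply, cycleOf_inv, (sameCycle_inv.mpr hx).cycleOf_apply, coe_inv,
    apply_symm_apply]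

theorem disjoint_mul_inv_cycleOf (σ : Perm α) (a : α) :
    (σ * (σ.cycleOf a)⁻¹).Disjoint (σ.cycleOf a) := fun x => by
  by_cases hx : σ.SameCycle a x
  · exact .inl (mul_inv_cycleOf_apply_of_sameCycle hx)
  · exact .inr (cycleOf_apply_of_not_sameCycle hx)

theorem sameCycle_cycleOf_mul_swap_pow_apply (hb : σ b = b) (hab : a ≠ b) (k : ℕ) :
    (σ.cycleOf a * swap a b).SameCycle b ((σ ^ k) a) := by
  set τ := σ.cycleOf a * swap a b
  have hτb : τ b = σ a := by simp [τ]
  have hτ : ∀ x, σ.SameCycle a x → x ≠ a → x ≠ b → τ x = σ x := fun x hx hxa hxb => by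
    simp [τ, swap_apply_of_ne_of_ne hxa hxb, hx.cycleOf_apply]
  induction k with
  | zero => exact SameCycle.symm ⟨1, by simp [τ, cycleOf_apply_of_apply_eq_self hb]⟩
  | succ k ih =>
    rw [pow_succ', mul_apply]
    by_cases hk : (σ ^ k) a = a
    · rw [hk, ← hτb]
      exact SameCycle.rfl.apply_right
    · have hkb : (σ ^ k) a ≠ b := fun h =>
        hab ((σ ^ k).injective (h.trans (pow_apply_eq_self_of_apply_eq_self hb k).symm))
      rw [← hτ _ (SameCycle.refl σ a).pow_right hk hkb]
      exact ih.apply_right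

-- `σ.cycleOf a * swap a b` is the cycle of `a` with the fixed point `b` inserted after `a`.
theorem isCycle_cycleOf_mul_swap (hb : σ b = b) (hab : a ≠ b) :
    (σ.cycleOf a * swap a b).IsCycle := by
  set τ := σ.cycleOf a * swap a b
  have hτb : τ b = σ a := by simp [τ]
  refine ⟨b, hτb ▸ fun h => hab (σ.injective (h.trans hb.symm)), fun y hy => ?_⟩
  rcases eq_or_ne y b with rfl | hyb
  · exact SameCycle.refl τ y
  suffices σ.SameCycle a y by
    obtain ⟨k, rfl⟩ := this.exists_nat_pow_eq
    exact sameCycle_cycleOf_mul_swap_pow_apply hb hab k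
  by_contra hy'
  have hya : y ≠ a := fun h => hy' (h ▸ SameCycle.refl σ a)
  exact hy (by simp [τ, swap_apply_of_ne_of_ne hya hyb, cycleOf_apply_of_not_sameCycle hy'])

theorem disjoint_mul_inv_cycleOf_cycleOf_mul_swap (hb : σ b = b) :
    (σ * (σ.cycleOf a)⁻¹).Disjoint (σ.cycleOf a * swap a b) := fun x => by
  by_cases hx : σ.SameCycle a x
  · exact .inl (mul_inv_cycleOf_apply_of_sameCycle hx)
  rcases eq_or_ne x b with rfl | hxb
  · left
    rw [mul_apply, inv_eq_iff_eq.mpr (cycleOf_apply_of_apply_eq_self hb).symm, hb]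
  · have hxa : x ≠ a := fun h => hx (h ▸ SameCycle.refl σ a)
    right
    rw [mul_apply, swap_apply_of_ne_of_ne hxa hxb, cycleOf_apply_of_not_sameCycle hx]

theorem card_cycleType_mul_inv_cycleOf_add (σ : Perm α) (a : α) :
    (σ * (σ.cycleOf a)⁻¹).cycleType.card + (if σ a = a then 0 else 1) = σ.cycleType.card := by
  conv_rhs => rw [← inv_mul_cancel_right σ (σ.cycleOf a)]
  rw [(disjoint_mul_inv_cycleOf σ a).cycleType_mul, Multiset.card_add]
  split_ifs with ha
  · simp [(cycleOf_eq_one_iff σ).mpr ha]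
  · rw [card_cycleType_eq_one.mpr (isCycle_cycleOf σ ha)]

theorem card_cycleType_mul_swap (hb : σ b = b) (hab : a ≠ b) :
    (σ * swap a b).cycleType.card = (σ * (σ.cycleOf a)⁻¹).cycleType.card + 1 := by
  have hsplit : σ * swap a b = σ * (σ.cycleOf a)⁻¹ * (σ.cycleOf a * swap a b) := by group
  rw [hsplit, (disjoint_mul_inv_cycleOf_cycleOf_mul_swap hb).cycleType_mul, Multiset.card_add,
    card_cycleType_eq_one.mpr (isCycle_cycleOf_mul_swap hb hab)]

theorem filter_mul_swap_apply_eq_self (hb : σ b = b) (hab : a ≠ b) :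
    univ.filter (fun x => (σ * swap a b) x = x) = univ.filter (fun x => σ x = x) \ {a, b} := by
  ext x
  simp only [mem_filter, mem_univ, true_and, mem_sdiff, mem_insert, mem_singleton]
  rcases eq_or_ne x a with rfl | hxa
  · simp [hb, hab.symm]
  rcases eq_or_ne x b with rfl | hxb
  · simpa using fun h : σ a = x => hab (σ.injective (h.trans hb.symm))
  · simp [swap_apply_of_ne_of_ne hxa hxb, hxa, hxb]

theorem card_filter_mul_swap_apply_eq_self_add (hb : σ b = b) (hab : a ≠ b) :
    #(univ.filter fun x => (σ * swap a b) x = x) + (if σ a = a then 2 else 1) =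
      #(univ.filter fun x => σ x = x) := by
  rw [filter_mul_swap_apply_eq_self hb hab,
    ← card_sdiff_add_card_inter (univ.filter fun x => σ x = x) {a, b}]
  congr 1
  split_ifs with ha
  · rw [inter_eq_right.mpr (by simp [insert_subset_iff, ha, hb]), card_pair hab]
  · rw [show univ.filter (fun x => σ x = x) ∩ {a, b} = {b} by ext; aesop, card_singleton]

end Equiv.Perm

open Equiv

theorem cycleCount_mul_swap {n : ℕ} {σ : Perm (Fin n)} {a b : Fin n} (hb : σ b = b) (hab : a ≠ b) :
    cycleCount (σ * swap a b) + 1 = cycleCount σ := by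
  have hτ := Perm.card_cycleType_mul_swap hb hab
  have hσ := σ.card_cycleType_mul_inv_cycleOf_add a
  have hfix := Perm.card_filter_mul_swap_apply_eq_self_add hb hab
  unfold cycleCount
  split_ifs at hσ hfix <;> omega

def permsBelow (n k : ℕ) : Finset (Perm (Fin n)) :=
  univ.filter fun σ => ∀ j : Fin n, k ≤ (j : ℕ) → σ j = j

section permsBelow

variable {n k : ℕ} {σ : Perm (Fin n)}

@[simp]
theorem mem_permsBelow : σ ∈ permsBelow n k ↔ ∀ j : Fin n, k ≤ (j : ℕ) → σ j = j := by
  simp [permsBelow]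

theorem permsBelow_zero : permsBelow n 0 = {1} := by
  ext σ
  simp [Perm.ext_iff]

theorem permsBelow_self : permsBelow n n = univ :=
  eq_univ_of_forall fun _ => mem_permsBelow.mpr fun j hj => absurd j.isLt (not_lt.mpr hj)

theorem sub_le_cycleCount_of_mem_permsBelow (hσ : σ ∈ permsBelow n k) : n - k ≤ cycleCount σ := by
  have hcover : (univ : Finset (Fin n)) ⊆
      univ.filter (fun j : Fin n => (j : ℕ) < k) ∪ univ.filter (fun j => σ j = j) := fun j _ => by
    by_cases hj : (j : ℕ) < k
    · simp [hj]
    · simp [mem_permsBelow.mp hσ j (not_lt.mp hj)]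
  have := (card_le_card hcover).trans (card_union_le _ _)
  rw [card_univ, Fintype.card_fin, Fin.card_filter_val_lt] at this
  unfold cycleCount
  omega

theorem filter_apply_eq_self_permsBelow_succ (k : Fin n) :
    (permsBelow n (k + 1)).filter (fun τ => τ k = k) = permsBelow n k := by
  ext τ
  simp only [mem_filter, mem_permsBelow]
  refine ⟨fun ⟨hτ, hk⟩ j hj => ?_, fun hτ => ⟨fun j hj => hτ j (by omega), hτ k le_rfl⟩⟩
  rcases hj.eq_or_lt with hj | hj
  · rwa [← Fin.ext hj]
  · exact hτ j hj

theorem mul_swap_mem_permsBelow_succ {k s : Fin n} (hσ : σ ∈ permsBelow n k) (hs : s < k) :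
    σ * swap s k ∈ permsBelow n (k + 1) := by
  refine mem_permsBelow.mpr fun j hj => ?_
  have hjs : j ≠ s := by rintro rfl; exact absurd hs (by omega)
  have hjk : j ≠ k := by rintro rfl; omega
  rw [Perm.mul_apply, swap_apply_of_ne_of_ne hjs hjk, mem_permsBelow.mp hσ j (by omega)]

theorem inv_apply_lt_of_mem_permsBelow_succ {k : Fin n} {τ : Perm (Fin n)}
    (hτ : τ ∈ permsBelow n (k + 1)) (hk : τ k ≠ k) : τ⁻¹ k < k := by
  have hτs : τ (τ⁻¹ k) = k := by simp
  have hne : τ⁻¹ k ≠ k := fun h => hk (by rwa [h] at hτs)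
  refine lt_of_le_of_ne (not_lt.mp fun hlt => hne ?_) hne
  exact (mem_permsBelow.mp hτ _ (by omega)).symm.trans hτs

theorem mul_swap_inv_apply_mem_permsBelow {k : Fin n} {τ : Perm (Fin n)}
    (hτ : τ ∈ permsBelow n (k + 1)) (hk : τ k ≠ k) : τ * swap (τ⁻¹ k) k ∈ permsBelow n k := by
  have hlt := inv_apply_lt_of_mem_permsBelow_succ hτ hk
  refine mem_permsBelow.mpr fun j hj => ?_
  rcases (Fin.le_iff_val_le_val.mpr hj).eq_or_lt with rfl | hkj
  · simp
  · rw [Perm.mul_apply, swap_apply_of_ne_of_ne (hlt.trans hkj).ne' hkj.ne',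
      mem_permsBelow.mp hτ j hkj]

theorem sum_permsBelow_sum_mul_swap {M : Type*} [AddCommMonoid M] (k : Fin n) (f : Perm (Fin n) → M) :
    ∑ σ ∈ permsBelow n k, ∑ s ∈ univ.filter (· < k), f (σ * swap s k) =
      ∑ τ ∈ (permsBelow n (k + 1)).filter (fun τ => τ k ≠ k), f τ := by
  have hinv {σ : Perm (Fin n)} {s : Fin n} (hσ : σ ∈ permsBelow n k) : (σ * swap s k)⁻¹ k = s := by
    rw [Perm.inv_eq_iff_eq, Perm.mul_apply, swap_apply_left, mem_permsBelow.mp hσ k le_rfl]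
  rw [← sum_product']
  refine sum_nbij' (fun p => p.1 * swap p.2 k) (fun τ => (τ * swap (τ⁻¹ k) k, τ⁻¹ k))
    ?_ ?_ ?_ ?_ fun _ _ => rfl
  · rintro ⟨σ, s⟩ hp
    simp only [mem_product, mem_filter, mem_univ, true_and] at hp ⊢
    refine ⟨mul_swap_mem_permsBelow_succ hp.1 hp.2, fun h => hp.2.ne ?_⟩
    rw [Perm.mul_apply, swap_apply_right] at h
    exact σ.injective (h.trans (mem_permsBelow.mp hp.1 k le_rfl).symm)
  · intro τ hτ
    simp only [mem_product, mem_filter, mem_univ, true_and] at hτ ⊢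
    exact ⟨mul_swap_inv_apply_mem_permsBelow hτ.1 hτ.2,
      inv_apply_lt_of_mem_permsBelow_succ hτ.1 hτ.2⟩
  · rintro ⟨σ, s⟩ hp
    simp only [hinv (mem_product.mp hp).1, mul_swap_mul_self]
  · intro τ _
    simp

end permsBelow

open MonoidAlgebra in
/-- A permutation in `permsBelow n k` fixes the `n - k` points `k, …, n - 1`, so the exponent
`cycleCount σ - (n - k)` does not truncate: it counts the cycles of `σ` on `{0, …, k - 1}`. -/
def cycleSum (n k : ℕ) (z : ℚ) : GA n :=
  ∑ σ ∈ permsBelow n k, single σ (z ^ (cycleCount σ - (n - k)))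

section cycleSum

open MonoidAlgebra

variable {n : ℕ} (z : ℚ)

theorem cycleSum_mul_algebraMap (k : Fin n) :
    cycleSum n k z * algebraMap ℚ (GA n) z =
      ∑ σ ∈ permsBelow n k, single σ (z ^ (cycleCount σ - (n - (k + 1)))) := by
  rw [cycleSum, sum_mul]
  refine sum_congr rfl fun σ hσ => ?_
  have hfix := sub_le_cycleCount_of_mem_permsBelow hσ
  rw [coe_algebraMap, Function.comp_apply, Algebra.algebraMap_self, RingHom.id_apply,
    single_mul_single, mul_one, ← pow_succ]
  congr 2
  omega

theorem cycleSum_mul_JM (k : Fin n) :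
    cycleSum n k z * JM n k =
      ∑ τ ∈ (permsBelow n (k + 1)).filter (fun τ => τ k ≠ k),
        single τ (z ^ (cycleCount τ - (n - (k + 1)))) := by
  rw [← sum_permsBelow_sum_mul_swap, cycleSum, JM, sum_mul_sum]
  refine sum_congr rfl fun σ hσ => sum_congr rfl fun s hs => ?_
  have hcycle := cycleCount_mul_swap (mem_permsBelow.mp hσ k le_rfl) (mem_filter.mp hs).2.ne
  have hfix := sub_le_cycleCount_of_mem_permsBelow hσ
  rw [single_mul_single, mul_one]
  congr 2
  omega

theorem cycleSum_succ (k : Fin n) :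
    cycleSum n (k + 1) z = cycleSum n k z * (algebraMap ℚ (GA n) z + JM n k) := by
  rw [mul_add, cycleSum_mul_algebraMap, cycleSum_mul_JM, ← filter_apply_eq_self_permsBelow_succ,
    sum_filter_add_sum_filter_not, cycleSum]

theorem prod_take_eq_cycleSum {k : ℕ} (hk : k ≤ n) :
    (((List.finRange n).map fun i => algebraMap ℚ (GA n) z + JM n i).take k).prod =
      cycleSum n k z := by
  induction k with
  | zero => simp [cycleSum, permsBelow_zero, cycleCount]; rfl
  | succ k ih =>
    rw [List.prod_take_succ _ _ (by simpa), ih (by omega), cycleSum_succ z ⟨k, hk⟩]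
    simp

end cycleSum

theorem prod_z_add_JM_general (n : ℕ) (z : ℚ) :
    ((List.finRange n).map (fun i => algebraMap ℚ (GA n) z + JM n i)).prod =
      ∑ σ : Equiv.Perm (Fin n), MonoidAlgebra.single σ (z ^ cycleCount σ) := by
  rw [← List.take_length (l := (List.finRange n).map _), List.length_map, List.length_finRange,
    prod_take_eq_cycleSum z le_rfl, cycleSum, permsBelow_self, Nat.sub_self]
  rfl

/-- `(z + J_1)(z + J_2)⋯(z + J_n) = Σ_{σ ∈ S(n)} z^{#(σ)} σ` in ℚ[S(n)]. -/
theorem prod_z_add_JM (n : ℕ) (hn : 1 ≤ n) (z : ℚ) :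
    ((List.finRange n).map (fun i => algebraMap ℚ (GA n) z + JM n i)).prod =
      ∑ σ : Equiv.Perm (Fin n), MonoidAlgebra.single σ (z ^ cycleCount σ) :=
  prod_z_add_JM_general n z
end
end

section
/- Let f ∈ ℚ[x_1,…,x_n] be a homogeneous symmetric polynomial of degree k, let π ∈ S(n) have reduced cycle type μ, andform f(J_1,…,J_n) ∈ ℚ[S(n)]. If the coefficient of π in f(J_1,…,J_n) is nonzero, then |μ| ≤ k and |μ| ≡ k (mod 2). -/
noncomputable section
open scoped Classical

/-!
Each Jucys–Murphy element is a sum of transpositions, so every permutation in the support of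
`f(J_1, …, J_n)` with `f` homogeneous of degree `k` is a product of `k` transpositions.
Comparing signs gives the parity statement. For the bound, consider `D_σ f = f ∘ σ - f` on `ℚⁿ`:
its rank is subadditive in `σ` and at most one for a transposition, while its kernel consists of
functions constant on the cycles of `σ`, so its rank is at least `n - #cycles = |μ|`.
-/

open Equiv Module LinearMap Finset
open scoped Pointwise

lemma Submodule.finrank_le_card_of_factorsThrough {α β : Type*} [Fintype β] (κ : α → β)
    (p : Submodule ℚ (α → ℚ)) (hp : ∀ f ∈ p, Function.FactorsThrough f κ) :
    finrank ℚ p ≤ Fintype.card β := by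
  have hle : p ≤ range (funLeft ℚ ℚ κ) := fun f hf =>
    ⟨Function.extend κ f 0, funext fun x => (hp f hf).extend_apply 0 x⟩
  calc finrank ℚ p ≤ finrank ℚ (range (funLeft ℚ ℚ κ)) := Submodule.finrank_mono hle
    _ ≤ finrank ℚ (β → ℚ) := finrank_range_le _
    _ = Fintype.card β := finrank_fintype_fun_eq_card ℚ

namespace Equiv.Perm

variable {α : Type*}

def displacement (σ : Perm α) : (α → ℚ) →ₗ[ℚ] α → ℚ := funLeft ℚ ℚ σ - LinearMap.id

def displacementRank (σ : Perm α) : ℕ := finrank ℚ (range σ.displacement)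

@[simp]
lemma displacement_apply (σ : Perm α) (f : α → ℚ) (x : α) :
    σ.displacement f x = f (σ x) - f x := rfl

lemma displacement_one : (1 : Perm α).displacement = 0 := by
  ext f x; simp

lemma displacement_mul (σ τ : Perm α) :
    (σ * τ).displacement = funLeft ℚ ℚ τ ∘ₗ σ.displacement + τ.displacement := by
  ext f x; simp [funLeft_apply]

lemma displacementRank_mul_le [Finite α] (σ τ : Perm α) :
    (σ * τ).displacementRank ≤ σ.displacementRank + τ.displacementRank := by
  have hrange : range (σ * τ).displacement ≤
      range (funLeft ℚ ℚ τ ∘ₗ σ.displacement) ⊔ range τ.displacement := by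
    rw [displacement_mul]; exact range_add_le _ _
  calc (σ * τ).displacementRank
      ≤ finrank ℚ ↥(range (funLeft ℚ ℚ τ ∘ₗ σ.displacement) ⊔ range τ.displacement) :=
        Submodule.finrank_mono hrange
    _ ≤ finrank ℚ (range (funLeft ℚ ℚ τ ∘ₗ σ.displacement)) + τ.displacementRank :=
        Submodule.finrank_add_le_finrank_add_finrank _ _
    _ ≤ σ.displacementRank + τ.displacementRank := by
        gcongr
        rw [range_comp]
        exact Submodule.finrank_map_le _ _

lemma displacementRank_swap_le_one [Finite α] [DecidableEq α] (a b : α) :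
    (swap a b).displacementRank ≤ 1 := by
  set v : α → ℚ := Pi.single a 1 - Pi.single b 1
  have hrange : range (swap a b).displacement ≤ Submodule.span ℚ {v} := by
    rintro - ⟨f, rfl⟩
    have : (swap a b).displacement f = (f b - f a) • v := by
      funext x
      rcases eq_or_ne x a with rfl | hxa
      · rcases eq_or_ne x b with rfl | hxb
        · simp
        · simp [v, hxb]
      rcases eq_or_ne x b with rfl | hxb
      · simp [v, hxa]
      · simp [v, swap_apply_of_ne_of_ne hxa hxb, hxa, hxb]
    rw [this]
    exact Submodule.smul_mem _ _ (Submodule.mem_span_singleton_self v)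
  calc (swap a b).displacementRank ≤ finrank ℚ (Submodule.span ℚ {v}) :=
        Submodule.finrank_mono hrange
    _ ≤ 1 := by simpa using finrank_span_le_card ({v} : Set (α → ℚ))

lemma displacementRank_le_of_mem_swaps_pow [Finite α] [DecidableEq α] {L : ℕ} {σ : Perm α}
    (hσ : σ ∈ {τ : Perm α | τ.IsSwap} ^ L) : σ.displacementRank ≤ L := by
  induction L generalizing σ with
  | zero =>
    rw [pow_zero, Set.mem_one] at hσ
    simp [hσ, displacementRank, displacement_one]
  | succ L ih =>
    rw [pow_succ] at hσ
    obtain ⟨ρ, hρ, -, ⟨a, b, -, rfl⟩, rfl⟩ := hσ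
    exact (displacementRank_mul_le ρ _).trans
      (add_le_add (ih hρ) (displacementRank_swap_le_one a b))

lemma mem_ker_displacement {σ : Perm α} {f : α → ℚ} :
    f ∈ ker σ.displacement ↔ ∀ x, f (σ x) = f x := by
  simp [funext_iff, sub_eq_zero]

lemma SameCycle.apply_eq_of_mem_ker_displacement {σ : Perm α} {f : α → ℚ} {x y : α}
    (hxy : σ.SameCycle x y) (hf : f ∈ ker σ.displacement) : f x = f y := by
  rw [mem_ker_displacement] at hf
  have hpow : ∀ (i : ℕ) z, f ((σ ^ i) z) = f z := fun i => by
    induction i with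
    | zero => simp
    | succ i ih => intro z; rw [pow_succ, mul_apply, ih, hf]
  obtain ⟨i, rfl⟩ := hxy
  rcases i.eq_nat_or_neg with ⟨i, rfl | rfl⟩
  · simp [hpow]
  · simpa using hpow i ((σ ^ (-(i : ℤ))) x)

variable [Fintype α] [DecidableEq α]

def orbitFinset (σ : Perm α) (x : α) : Finset α :=
  if x ∈ σ.support then (σ.cycleOf x).support else {x}

lemma mem_orbitFinset_self (σ : Perm α) (x : α) : x ∈ σ.orbitFinset x := by
  unfold orbitFinset
  split_ifs with hx
  · exact mem_support_cycleOf_iff.mpr ⟨SameCycle.refl _ _, hx⟩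
  · exact mem_singleton_self x

lemma sameCycle_of_mem_orbitFinset {σ : Perm α} {x y : α} (hy : y ∈ σ.orbitFinset x) :
    σ.SameCycle x y := by
  unfold orbitFinset at hy
  split_ifs at hy
  · exact (mem_support_cycleOf_iff.mp hy).1
  · rw [mem_singleton.mp hy]

lemma card_image_orbitFinset_le (σ : Perm α) :
    #(univ.image σ.orbitFinset) ≤ Fintype.card α - #σ.support + Multiset.card σ.cycleType := by
  have hsub : univ.image σ.orbitFinset ⊆
      σ.supportᶜ.image singleton ∪ σ.cycleFactorsFinset.image support := by
    intro s hs
    obtain ⟨x, -, rfl⟩ := mem_image.mp hs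
    unfold orbitFinset
    split_ifs with hx
    · exact mem_union_right _ (mem_image_of_mem _ (cycleOf_mem_cycleFactorsFinset_iff.mpr hx))
    · exact mem_union_left _ (mem_image_of_mem _ (mem_compl.mpr hx))
  calc #(univ.image σ.orbitFinset)
      ≤ #(σ.supportᶜ.image singleton) + #(σ.cycleFactorsFinset.image support) :=
        (card_le_card hsub).trans (card_union_le _ _)
    _ ≤ #σ.supportᶜ + #σ.cycleFactorsFinset := add_le_add card_image_le card_image_le
    _ = Fintype.card α - #σ.support + Multiset.card σ.cycleType := by
        rw [card_compl, cycleType_def, Multiset.card_map]; rfl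

lemma card_support_le_displacementRank_add_card_cycleType (σ : Perm α) :
    #σ.support ≤ σ.displacementRank + Multiset.card σ.cycleType := by
  have hker : finrank ℚ (ker σ.displacement) ≤ #(univ.image σ.orbitFinset) := by
    refine (Submodule.finrank_le_card_of_factorsThrough
      (fun x => (⟨σ.orbitFinset x, mem_image_of_mem _ (mem_univ x)⟩ : univ.image σ.orbitFinset))
      (ker σ.displacement) fun f hf x y hxy => by
        have hy : y ∈ σ.orbitFinset x := by
          rw [show σ.orbitFinset x = σ.orbitFinset y from congrArg Subtype.val hxy]
          exact mem_orbitFinset_self σ y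
        exact (sameCycle_of_mem_orbitFinset hy).apply_eq_of_mem_ker_displacement hf).trans_eq ?_
    exact Fintype.card_coe _
  have hrank := finrank_range_add_finrank_ker σ.displacement
  rw [finrank_fintype_fun_eq_card] at hrank
  have := card_image_orbitFinset_le σ
  have := σ.support.card_le_univ
  unfold displacementRank
  omega

lemma sign_of_mem_swaps_pow {L : ℕ} {σ : Perm α}
    (hσ : σ ∈ {τ : Perm α | τ.IsSwap} ^ L) : sign σ = (-1) ^ L := by
  induction L generalizing σ with
  | zero =>
    rw [pow_zero, Set.mem_one] at hσ
    simp [hσ]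
  | succ L ih =>
    rw [pow_succ] at hσ
    obtain ⟨ρ, hρ, τ, hτ, rfl⟩ := hσ
    rw [sign_mul, ih hρ, IsSwap.sign_eq hτ, pow_succ]

end Equiv.Perm

lemma Int.units_neg_one_pow_eq_iff {a b : ℕ} : (-1 : ℤˣ) ^ a = (-1) ^ b ↔ a % 2 = b % 2 := by
  rw [Int.units_pow_eq_pow_mod_two, Int.units_pow_eq_pow_mod_two (-1) b]
  rcases Nat.mod_two_eq_zero_or_one a with ha | ha <;>
    rcases Nat.mod_two_eq_zero_or_one b with hb | hb <;> simp [ha, hb]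

section ReducedCycleType

open Equiv.Perm

variable {n : ℕ}

lemma sum_reducedCycleType_add_card_cycleType (σ : Perm (Fin n)) :
    (reducedCycleType σ).sum + Multiset.card σ.cycleType = #σ.support := by
  calc (reducedCycleType σ).sum + Multiset.card σ.cycleType
      = (σ.cycleType.map fun i => i - 1 + 1).sum := by
        simp [reducedCycleType, Multiset.sum_map_add]
    _ = σ.cycleType.sum := by
        rw [Multiset.map_congr rfl fun i hi => Nat.sub_add_cancel (one_lt_of_mem_cycleType hi).le,
          Multiset.map_id']
    _ = #σ.support := sum_cycleType σ

lemma sign_eq_neg_one_pow_sum_reducedCycleType (σ : Perm (Fin n)) :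
    sign σ = (-1) ^ (reducedCycleType σ).sum := by
  rw [sign_of_cycleType, sum_cycleType, ← sum_reducedCycleType_add_card_cycleType, add_assoc,
    ← two_mul, pow_add, pow_mul, Int.units_sq, one_pow, mul_one]

lemma sum_reducedCycleType_le_of_mem_swaps_pow {L : ℕ} {σ : Perm (Fin n)}
    (hσ : σ ∈ {τ : Perm (Fin n) | τ.IsSwap} ^ L) : (reducedCycleType σ).sum ≤ L := by
  have := card_support_le_displacementRank_add_card_cycleType σ
  have := displacementRank_le_of_mem_swaps_pow hσ
  have := sum_reducedCycleType_add_card_cycleType σ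
  omega

lemma sum_reducedCycleType_mod_two_of_mem_swaps_pow {L : ℕ} {σ : Perm (Fin n)}
    (hσ : σ ∈ {τ : Perm (Fin n) | τ.IsSwap} ^ L) : (reducedCycleType σ).sum % 2 = L % 2 := by
  rw [← Int.units_neg_one_pow_eq_iff, ← sign_eq_neg_one_pow_sum_reducedCycleType,
    sign_of_mem_swaps_pow hσ]

end ReducedCycleType

namespace MonoidAlgebra

variable {k G : Type*} [Semiring k] {s t : Set G}

lemma single_mem_supported {a : G} (ha : a ∈ s) (r : k) : single a r ∈ supported k k s :=
  mem_supported.2 <| by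
    rw [coeff_single]
    exact (Finset.coe_subset.2 Finsupp.support_single_subset).trans (by simpa using ha)

variable [Monoid G]

lemma mul_mem_supported_mul {x y : MonoidAlgebra k G} (hx : x ∈ supported k k s)
    (hy : y ∈ supported k k t) : x * y ∈ supported k k (s * t) := by
  classical
  exact mem_supported.2 <| (Finset.coe_subset.2 (support_coeff_mul_subset x y)).trans <| by
    rw [Finset.coe_mul]; exact Set.mul_subset_mul hx hy

lemma pow_mem_supported_pow {x : MonoidAlgebra k G} (hx : x ∈ supported k k s) (m : ℕ) :
    x ^ m ∈ supported k k (s ^ m) := by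
  induction m with
  | zero => simpa [one_def] using single_mem_supported (Set.mem_one.2 rfl) (1 : k)
  | succ m ih => rw [pow_succ, pow_succ]; exact mul_mem_supported_mul ih hx

lemma prod_map_pow_mem_supported_pow {ι : Type*} {g : ι → MonoidAlgebra k G}
    (hg : ∀ i, g i ∈ supported k k s) (m : ι → ℕ) (l : List ι) :
    (l.map fun i => g i ^ m i).prod ∈ supported k k (s ^ (l.map m).sum) := by
  induction l with
  | nil => simpa [one_def] using single_mem_supported (Set.mem_one.2 rfl) (1 : k)
  | cons i l ih =>
    simp only [List.map_cons, List.prod_cons, List.sum_cons, pow_add]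
    exact mul_mem_supported_mul (pow_mem_supported_pow (hg i) _) ih

end MonoidAlgebra

open MonoidAlgebra in
lemma JM_mem_supported_swaps (n : ℕ) (i : Fin n) :
    JM n i ∈ supported ℚ ℚ {τ : Perm (Fin n) | τ.IsSwap} :=
  Submodule.sum_mem _ fun j hj =>
    single_mem_supported (s := {τ : Perm (Fin n) | τ.IsSwap}) ⟨j, i, (mem_filter.mp hj).2.ne, rfl⟩ 1

open MonoidAlgebra in
lemma evalJM_mem_supported_swaps_pow {n k : ℕ} {f : MvPolynomial (Fin n) ℚ}
    (hf : f.IsHomogeneous k) : evalJM f ∈ supported ℚ ℚ ({τ : Perm (Fin n) | τ.IsSwap} ^ k) := by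
  refine Submodule.sum_mem _ fun m hm => Submodule.smul_mem _ _ ?_
  have hdeg : ((List.finRange n).map m).sum = k := by
    rw [← Fin.sum_univ_def, ← Finsupp.degree_eq_sum, Finsupp.degree_eq_weight_one]
    exact hf (MvPolynomial.mem_support_iff.mp hm)
  simpa only [hdeg] using
    prod_map_pow_mem_supported_pow (JM_mem_supported_swaps n) m (List.finRange n)

theorem vanishing_criterion_general (n k : ℕ) (f : MvPolynomial (Fin n) ℚ)
    (hhom : f.IsHomogeneous k)
    (π : Equiv.Perm (Fin n)) (hne : (evalJM f).coeff π ≠ 0) :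
    (reducedCycleType π).sum ≤ k ∧ (reducedCycleType π).sum % 2 = k % 2 := by
  have hπ : π ∈ {τ : Perm (Fin n) | τ.IsSwap} ^ k :=
    MonoidAlgebra.mem_supported.1 (evalJM_mem_supported_swaps_pow hhom)
      (Finsupp.mem_support_iff.2 hne)
  exact ⟨sum_reducedCycleType_le_of_mem_swaps_pow hπ,
    sum_reducedCycleType_mod_two_of_mem_swaps_pow hπ⟩

/-- Vanishing criterion: if `f` is a homogeneous symmetric polynomial of degree `k` and the
coefficient of a permutation `π` of reduced cycle type `μ` in `f(J_1,…,J_n)` is nonzero,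
then `|μ| ≤ k` and `|μ| ≡ k (mod 2)`. -/
theorem vanishing_criterion (n k : ℕ) (f : MvPolynomial (Fin n) ℚ)
    (hhom : f.IsHomogeneous k) (hsym : f.IsSymmetric)
    (π : Equiv.Perm (Fin n)) (hne : (evalJM f).coeff π ≠ 0) :
    (reducedCycleType π).sum ≤ k ∧ (reducedCycleType π).sum % 2 = k % 2 :=
  vanishing_criterion_general n k f hhom π hne
end
end

section
/- For all integers a ≥ 0 and r ≥ 1, the cardinality of 𝔈(a;r) equals the Catalan number Cat_r = (1/(r+1))·binom(2r, r). In particular, Σ_{λ ⊢ k} RC(λ) = Cat_k for every k ≥ 1. -/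
noncomputable section
open scoped Classical

/-- Membership in `𝔈(a;r)`: a weakly increasing sequence `(i_1 ≤ ⋯ ≤ i_r)` (zero-based here)
with `i_p ≥ a + p` for `1 ≤ p ≤ r − 1` and `i_r = a + r`. -/
def Epred (a r : ℕ) (t : Fin r → ℕ) : Prop :=
  Monotone t ∧ (∀ p : Fin r, (p : ℕ) + 1 ≤ r - 1 → a + (p : ℕ) + 1 ≤ t p) ∧
    (∀ p : Fin r, (p : ℕ) + 1 = r → t p = a + r)

/-- The type of a weakly increasing sequence: the multiset of multiplicities of its
distinct values. -/
def seqTypeNat {k : ℕ} (t : Fin k → ℕ) : Multiset ℕ :=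
  (Finset.univ.image t).val.map (fun v => (Finset.univ.filter (fun i => t i = v)).card)

/-- The refined Catalan number `RC(λ)`: the number of sequences in `𝔈(|λ|) = 𝔈(0;|λ|)`
of type `λ`. -/
def RC (lam : Multiset ℕ) : ℕ :=
  Nat.card {t : Fin lam.sum → ℕ // Epred 0 lam.sum t ∧ seqTypeNat t = lam}

/-!
Write `𝔈(a;n)` as the monotone `u` with `a + p < u p ≤ a + n`. Such a `u` has a first index `i`
with `u i = a + i + 1` (its first return to the diagonal; the last index always qualifies), and
cutting there splits `u` bijectively into a sequence of `𝔈(a+1; i)` (before `i`) and one of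
`𝔈(a+i+1; n-1-i)` (after `i`). Keeping the offset `a` as a parameter makes both pieces again of
the same kind, so `|𝔈(a;n)|` satisfies the Catalan recursion for every `a`. Sorting `𝔈(k)` by
type gives `Σ_{λ ⊢ k} RC(λ) = |𝔈(k)|`.
-/

theorem Nat.card_eq_sum_card_fiber {α β : Type*} [Finite α] [Fintype β] (f : α → β) :
    Nat.card α = ∑ b, Nat.card {x // f x = b} := by
  rw [← Nat.card_congr (Equiv.sigmaFiberEquiv f), Nat.card_sigma]

theorem Fin.monotone_append {α : Type*} [Preorder α] {m n : ℕ} {f : Fin m → α} {g : Fin n → α}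
    (hf : Monotone f) (hg : Monotone g) (hfg : ∀ i j, f i ≤ g j) : Monotone (Fin.append f g) := by
  intro p q hpq
  induction p using Fin.addCases with
  | left i =>
    induction q using Fin.addCases with
    | left j => simpa using hf ((Fin.strictMono_castAdd n).le_iff_le.mp hpq)
    | right j => simpa using hfg i j
  | right i =>
    induction q using Fin.addCases with
    | left j => simp only [Fin.le_def, Fin.val_natAdd, Fin.val_castAdd] at hpq; omega
    | right j => simpa using hg ((Fin.strictMono_natAdd m).le_iff_le.mp hpq)

theorem Fin.monotone_cons {α : Type*} [Preorder α] {n : ℕ} {f : Fin n → α} {x : α}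
    (hf : Monotone f) (hx : ∀ i, x ≤ f i) : Monotone (Fin.cons x f : Fin (n + 1) → α) := by
  rw [monotone_iff_forall_lt]
  exact (Fin.liftFun_cons (· ≤ ·)).mpr ⟨hx, monotone_iff_forall_lt.mp hf⟩

def IsCatalanSeq (a n : ℕ) (u : Fin n → ℕ) : Prop :=
  Monotone u ∧ ∀ p : Fin n, a + p < u p ∧ u p ≤ a + n

theorem epred_iff_isCatalanSeq {a r : ℕ} {t : Fin r → ℕ} : Epred a r t ↔ IsCatalanSeq a r t := by
  constructor
  · rintro ⟨hmono, hlow, hlast⟩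
    refine ⟨hmono, fun p => ?_⟩
    have hp := p.isLt
    have hl : t ⟨r - 1, by omega⟩ = a + r := hlast _ (by simp only; omega)
    have hle : t p ≤ t ⟨r - 1, by omega⟩ := hmono (Fin.le_def.mpr (by simp only; omega))
    by_cases hp' : (p : ℕ) + 1 ≤ r - 1
    · have := hlow p hp'
      omega
    · have := hlast p (by omega)
      omega
  · rintro ⟨hmono, hbound⟩
    refine ⟨hmono, fun p _ => hbound p |>.1, fun p hp => ?_⟩
    have := hbound p
    omega

instance (a n : ℕ) : Finite {u // IsCatalanSeq a n u} :=
  Finite.of_injective (fun u p => (⟨u.1 p, Nat.lt_succ_of_le (u.2.2 p).2⟩ : Fin (a + n + 1)))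
    fun _ _ h => Subtype.ext <| funext fun p => congrArg Fin.val (congrFun h p)

instance (a r : ℕ) : Finite {t // Epred a r t} :=
  Finite.of_equiv _ (Equiv.subtypeEquivRight fun _ => epred_iff_isCatalanSeq).symm

section FirstTouch

variable {a n : ℕ}

theorem IsCatalanSeq.touch_last {u : Fin (n + 1) → ℕ} (hu : IsCatalanSeq a (n + 1) u) :
    u (Fin.last n) = a + Fin.last n + 1 := by
  have := hu.2 (Fin.last n)
  simp only [Fin.val_last] at this ⊢
  omega

def firstTouch (u : {u // IsCatalanSeq a (n + 1) u}) : Fin (n + 1) :=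
  Fin.find (fun p => u.1 p = a + p + 1) ⟨_, u.2.touch_last⟩

theorem firstTouch_eq_iff {u : {u // IsCatalanSeq a (n + 1) u}} {i : Fin (n + 1)} :
    firstTouch u = i ↔ u.1 i = a + i + 1 ∧ ∀ p < i, u.1 p ≠ a + p + 1 :=
  Fin.find_eq_iff _

end FirstTouch

section FirstReturn

/- Lengths are written `i + (k + 1)`, the shape `Fin.append` produces; `firstTouch` expects
`n + 1`, hence the explicit `n := i + k`. -/

variable {a i k : ℕ}

theorem IsCatalanSeq.append_cons {A : Fin i → ℕ} {B : Fin k → ℕ}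
    (hA : IsCatalanSeq (a + 1) i A) (hB : IsCatalanSeq (a + i + 1) k B) :
    IsCatalanSeq a (i + (k + 1)) (Fin.append A (Fin.cons (a + i + 1) B)) := by
  have hA_le (p : Fin i) : A p ≤ a + i + 1 := by have := (hA.2 p).2; omega
  have hB_ge (q : Fin k) : a + i + 1 ≤ B q := by have := (hB.2 q).1; omega
  have hcons_ge (q : Fin (k + 1)) : a + i + 1 ≤ (Fin.cons (a + i + 1) B : Fin (k + 1) → ℕ) q := by
    induction q using Fin.cases <;> simp [hB_ge]
  refine ⟨Fin.monotone_append hA.1 (Fin.monotone_cons hB.1 hB_ge)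
    fun p q => (hA_le p).trans (hcons_ge q), fun p => ?_⟩
  induction p using Fin.addCases with
  | left p =>
    have := hA.2 p
    simp only [Fin.val_castAdd, Fin.append_left]
    omega
  | right q =>
    induction q using Fin.cases with
    | zero => simp
    | succ q =>
      have := hB.2 q
      simp only [Fin.val_natAdd, Fin.val_succ, Fin.append_right, Fin.cons_succ]
      omega

theorem firstTouch_append_cons {A : Fin i → ℕ} {B : Fin k → ℕ}
    (hA : IsCatalanSeq (a + 1) i A) (hB : IsCatalanSeq (a + i + 1) k B) :
    firstTouch (n := i + k) ⟨_, hA.append_cons hB⟩ = Fin.natAdd i (0 : Fin (k + 1)) := by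
  refine firstTouch_eq_iff.mpr ⟨by simp, fun p hp => ?_⟩
  have hpi : (p : ℕ) < i := by simpa [Fin.lt_def] using hp
  have := (hA.2 ⟨p, hpi⟩).1
  rw [show p = Fin.castAdd (k + 1) ⟨p, hpi⟩ from rfl]
  simp only [Fin.append_left, Fin.val_castAdd] at this ⊢
  omega

theorem isCatalanSeq_castAdd_of_firstTouch_eq {u : {u // IsCatalanSeq a (i + (k + 1)) u}}
    (hu : firstTouch (n := i + k) u = Fin.natAdd i (0 : Fin (k + 1))) :
    IsCatalanSeq (a + 1) i fun p => u.1 (Fin.castAdd (k + 1) p) := by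
  obtain ⟨htouch, hbefore⟩ := firstTouch_eq_iff.mp hu
  refine ⟨u.2.1.comp (Fin.strictMono_castAdd _).monotone, fun p => ⟨?_, ?_⟩⟩
  · have h1 := (u.2.2 (Fin.castAdd (k + 1) p)).1
    have h2 := hbefore (Fin.castAdd (k + 1) p) (by simp [Fin.lt_def])
    simp only [Fin.val_castAdd] at h1 h2 ⊢
    omega
  · have := u.2.1 (show Fin.castAdd (k + 1) p ≤ Fin.natAdd i 0 by simp [Fin.le_def])
    simp only [htouch, Fin.val_natAdd, Fin.val_zero] at this ⊢
    omega

theorem IsCatalanSeq.natAdd_succ {u : Fin (i + (k + 1)) → ℕ}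
    (hu : IsCatalanSeq a (i + (k + 1)) u) :
    IsCatalanSeq (a + i + 1) k fun q => u (Fin.natAdd i q.succ) := by
  refine ⟨hu.1.comp ((Fin.strictMono_natAdd i).monotone.comp Fin.strictMono_succ.monotone),
    fun q => ?_⟩
  have := hu.2 (Fin.natAdd i q.succ)
  simp only [Fin.val_natAdd, Fin.val_succ] at this ⊢
  omega

def firstTouchFiberEquiv (a i k : ℕ) :
    {u : {u // IsCatalanSeq a (i + (k + 1)) u} //
        firstTouch (n := i + k) u = Fin.natAdd i (0 : Fin (k + 1))} ≃
      {A // IsCatalanSeq (a + 1) i A} × {B // IsCatalanSeq (a + i + 1) k B} where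
  toFun u := (⟨_, isCatalanSeq_castAdd_of_firstTouch_eq u.2⟩, ⟨_, u.1.2.natAdd_succ⟩)
  invFun AB := ⟨⟨_, AB.1.2.append_cons AB.2.2⟩, firstTouch_append_cons AB.1.2 AB.2.2⟩
  left_inv u := by
    obtain ⟨htouch, -⟩ := firstTouch_eq_iff.mp u.2
    refine Subtype.ext <| Subtype.ext <| funext fun p => ?_
    induction p using Fin.addCases with
    | left p => simp
    | right q =>
      induction q using Fin.cases with
      | zero => simpa using htouch.symm
      | succ q => simp
  right_inv AB := by
    ext <;> simp

end FirstReturn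

theorem card_isCatalanSeq (a n : ℕ) : Nat.card {u // IsCatalanSeq a n u} = catalan n := by
  induction n using Nat.strong_induction_on generalizing a with
  | _ n ih =>
  cases n with
  | zero =>
    rw [catalan_zero, Nat.card_eq_one_iff_exists]
    exact ⟨⟨finZeroElim, fun p => p.elim0, fun p => p.elim0⟩,
      fun u => Subtype.ext (funext fun p => p.elim0)⟩
  | succ n =>
    rw [Nat.card_eq_sum_card_fiber firstTouch, catalan_succ]
    refine Finset.sum_congr rfl fun j _ => ?_
    obtain ⟨j, hj⟩ := j
    obtain ⟨k, rfl⟩ : ∃ k, n = j + k := ⟨n - j, by omega⟩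
    refine (Nat.card_congr (firstTouchFiberEquiv a j k)).trans ?_
    rw [Nat.card_prod, ih _ (by omega), ih _ (by omega), Nat.add_sub_cancel_left]

theorem card_epred (a r : ℕ) : Nat.card {t // Epred a r t} = catalan r := by
  rw [Nat.card_congr (Equiv.subtypeEquivRight fun _ => epred_iff_isCatalanSeq), card_isCatalanSeq]

def seqTypePartition {k : ℕ} (t : Fin k → ℕ) : Nat.Partition k where
  parts := seqTypeNat t
  parts_pos := by
    simp only [seqTypeNat, Multiset.mem_map]
    rintro _ ⟨v, hv, rfl⟩
    obtain ⟨p, -, rfl⟩ := Finset.mem_image.mp (Finset.mem_def.mpr hv)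
    exact Finset.card_pos.mpr ⟨p, by simp⟩
  parts_sum := by
    rw [seqTypeNat, ← Finset.sum_eq_multiset_sum, ← Finset.card_eq_sum_card_image,
      Finset.card_univ, Fintype.card_fin]

theorem RC_eq_card {k : ℕ} {lam : Multiset ℕ} (h : lam.sum = k) :
    RC lam = Nat.card {t : Fin k → ℕ // Epred 0 k t ∧ seqTypeNat t = lam} := by
  subst h
  rfl

theorem sum_RC_eq_card_epred (k : ℕ) :
    ∑ lam : Nat.Partition k, RC lam.parts = Nat.card {t // Epred 0 k t} := by
  rw [Nat.card_eq_sum_card_fiber fun t : {t // Epred 0 k t} => seqTypePartition t.1]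
  refine Finset.sum_congr rfl fun lam _ => ?_
  rw [RC_eq_card lam.parts_sum]
  refine Nat.card_congr ((Equiv.subtypeSubtypeEquivSubtypeInter (Epred 0 k)
    (seqTypePartition · = lam)).trans (Equiv.subtypeEquivRight fun t => ?_)).symm
  simp [Nat.Partition.ext_iff, seqTypePartition]

theorem card_E_eq_catalan_general (a r k : ℕ) :
    Nat.card {t : Fin r → ℕ // Epred a r t} = catalan r ∧
    catalan r = (2 * r).choose r / (r + 1) ∧
    ∑ lam : Nat.Partition k, RC lam.parts = catalan k :=
  ⟨card_epred a r, by rw [catalan_eq_centralBinom_div, Nat.centralBinom_eq_two_mul_choose],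
    by rw [sum_RC_eq_card_epred, card_epred]⟩

/-- `|𝔈(a;r)| = Cat_r = (1/(r+1))·binom(2r,r)`, and consequently
`Σ_{λ ⊢ k} RC(λ) = Cat_k`. -/
theorem card_E_eq_catalan (a r k : ℕ) (hr : 1 ≤ r) (hk : 1 ≤ k) :
    Nat.card {t : Fin r → ℕ // Epred a r t} = catalan r ∧
    catalan r = (2 * r).choose r / (r + 1) ∧
    ∑ lam : Nat.Partition k, RC lam.parts = catalan k :=
  card_E_eq_catalan_general a r k
end
end

section
/- Let μ be a partition with |μ| = k and let n ≥ wt(μ). Then the coefficient in ℚ[S(n)] of the canonical permutation σ_μ in h_k(J_1,…,J_n) equals ∏_{i=1}^{ℓ(μ)} Cat_{μ_i}, where h_k is the complete homogeneous symmetric polynomial of degree k in n variables and Cat_r = (1/(r+1))·binom(2r,r) is the r-th Catalan number. In particular F_μ^{|μ|}(n) = ∏_{i} Cat_{μ_i} is independent of n. -/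
/-!
Expanding by the last factor,
`h_k(J_1,…,J_{B+1}) = ∑_{b ≤ B} h_{k-1}(J_1,…,J_{b+1}) J_{b+1}`, so the coefficient of `σ`
is a sum of coefficients of the `σ (s b)` with `s < b ≤ B`. No term of
`h_{k-1}(J_1,…,J_{b+1})` moves a point beyond `b`, and a product of `k - 1` transpositions has
at least `n - k + 1` cycles, whereas `σ_μ` has at most `n - |μ|` and `σ_μ (s b)` loses one more
when `s` and `b` lie in different cycles. Hence only the transpositions splitting the last cycle
`(o, …, o+m+1)` of `σ_μ` at its largest point contribute; splitting after `o + j` gives the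
canonical permutation with blocks `j` and `m - j` in its place, and Catalan's recursion
`Cat_{m+1} = ∑_j Cat_j Cat_{m-j}` closes the induction on `|μ|`.
-/

noncomputable section
open scoped Classical

/-- `h_k(J_1, …, J_n)`: the complete homogeneous symmetric polynomial of degree `k` in `n`
variables evaluated at the Jucys–Murphy elements. -/
def hEval (n k : ℕ) : GA n :=
  ∑ t ∈ Finset.univ.filter (fun t : Fin k → Fin n => Monotone t),
    ((List.ofFn t).map (JM n)).prod

/-- The cycle `(o+1, o+2, …, o+m+1)` (1-based), i.e. on zero-based points `o, …, o+m`. -/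
def cycleOn (n : ℕ) (hn : 0 < n) (o m : ℕ) : Equiv.Perm (Fin n) :=
  ((List.range (m + 1)).map (fun j => (⟨(o + j) % n, Nat.mod_lt _ hn⟩ : Fin n))).formPerm

/-- Auxiliary: product of the canonical disjoint cycles on consecutive blocks. -/
def canonicalPermAux (n : ℕ) (hn : 0 < n) : ℕ → List ℕ → Equiv.Perm (Fin n)
  | _, [] => 1
  | o, m :: rest => cycleOn n hn o m * canonicalPermAux n hn (o + m + 1) rest

/-- The canonical permutation `σ_μ` of reduced cycle type `μ`: the product of disjoint
cycles of lengths `μ_1+1, μ_2+1, …` on consecutive blocks of points. -/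
def canonicalPerm (n : ℕ) (hn : 0 < n) (mu : List ℕ) : Equiv.Perm (Fin n) :=
  canonicalPermAux n hn 0 mu

open Equiv Module

theorem Submodule.finrank_le_finrank_add_one_of_inf_ker_le {K V : Type*} [Field K]
    [AddCommGroup V] [Module K V] [FiniteDimensional K V] {p q : Submodule K V}
    (φ : V →ₗ[K] K) (h : p ⊓ LinearMap.ker φ ≤ q) : finrank K p ≤ finrank K q + 1 := by
  have hdim := Submodule.finrank_sup_add_finrank_inf_eq p (LinearMap.ker φ)
  have hsup := Submodule.finrank_le (p ⊔ LinearMap.ker φ)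
  have hker := φ.finrank_range_add_finrank_ker
  have hrange : finrank K (LinearMap.range φ) ≤ 1 := by
    simpa using Submodule.finrank_le (LinearMap.range φ)
  have := Submodule.finrank_mono h
  omega

namespace Equiv.Perm

variable {α : Type*}

def invariants (π : Perm α) : Submodule ℚ (α → ℚ) where
  carrier := {f | ∀ x, f (π x) = f x}
  add_mem' hf hg x := by simp [hf x, hg x]
  zero_mem' _ := rfl
  smul_mem' c f hf x := by simp [hf x]

theorem mem_invariants {π : Perm α} {f : α → ℚ} :
    f ∈ π.invariants ↔ ∀ x, f (π x) = f x :=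
  Iff.rfl

-- The number of cycles of `π`, fixed points included: a function is invariant iff it is
-- constant on every cycle.
def numCycles (π : Perm α) : ℕ := finrank ℚ π.invariants

theorem numCycles_one [Fintype α] : numCycles (1 : Perm α) = Fintype.card α := by
  have : (1 : Perm α).invariants = ⊤ := by ext f; simp [mem_invariants]
  rw [numCycles, this, finrank_top, finrank_fintype_fun_eq_card]

section Swap

variable [DecidableEq α] {π : Perm α} {s t : α} {f : α → ℚ}

theorem mem_invariants_mul_swap_iff (hst : f s = f t) :
    f ∈ (π * swap s t).invariants ↔ f ∈ π.invariants := by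
  have hswap : ∀ y, f (swap s t y) = f y := fun y => by
    rcases eq_or_ne y s with rfl | hys
    · rw [swap_apply_left, hst]
    rcases eq_or_ne y t with rfl | hyt
    · rw [swap_apply_right, hst]
    · rw [swap_apply_of_ne_of_ne hys hyt]
  refine ⟨fun hf x => ?_, fun hf x => ?_⟩
  · simpa [hswap] using hf (swap s t x)
  · rw [mul_apply, hf, hswap]

theorem numCycles_le_numCycles_mul_swap_add_one [Fintype α] (π : Perm α) (s t : α) :
    numCycles π ≤ numCycles (π * swap s t) + 1 := by
  refine Submodule.finrank_le_finrank_add_one_of_inf_ker_le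
    (LinearMap.proj (R := ℚ) (φ := fun _ : α => ℚ) s - LinearMap.proj t) ?_
  rintro f ⟨hf, hst⟩
  exact (mem_invariants_mul_swap_iff (sub_eq_zero.mp (LinearMap.mem_ker.mp hst))).mpr hf

theorem numCycles_mul_swap_le_add_one [Fintype α] (π : Perm α) (s t : α) :
    numCycles (π * swap s t) ≤ numCycles π + 1 := by
  simpa [mul_assoc] using numCycles_le_numCycles_mul_swap_add_one (π * swap s t) s t

/-- Multiplying by `swap s t` merges the cycles of `s` and `t`. -/
theorem apply_eq_of_mem_invariants_mul_swap [Finite α] (h : ¬π.SameCycle s t)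
    (hf : f ∈ (π * swap s t).invariants) : f s = f t := by
  have hoff : ∀ x, x ≠ s → x ≠ t → f (π x) = f x := fun x hs ht => by
    simpa [swap_apply_of_ne_of_ne hs ht] using hf x
  have horbit : ∀ i, f ((π ^ (i + 1)) t) = f s := by
    intro i
    induction i with
    | zero => simpa using hf s
    | succ i ih =>
      rw [pow_succ', mul_apply]
      rcases eq_or_ne ((π ^ (i + 1)) t) t with ht | ht
      · rw [ht]; simpa using hf s
      · have hs : (π ^ (i + 1)) t ≠ s := fun hs => h (hs ▸ sameCycle_pow_left.mpr .rfl)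
        rw [hoff _ hs ht, ih]
  have := horbit (orderOf π - 1)
  rwa [Nat.sub_add_cancel (orderOf_pos π), pow_orderOf_eq_one, one_apply, eq_comm] at this

theorem invariants_mul_swap_lt [Finite α] (h : ¬π.SameCycle s t) :
    (π * swap s t).invariants < π.invariants := by
  refine lt_of_le_of_ne (fun f hf => ?_) fun heq => ?_
  · exact (mem_invariants_mul_swap_iff (apply_eq_of_mem_invariants_mul_swap h hf)).mp hf
  · let g : α → ℚ := fun x => if π.SameCycle t x then 1 else 0
    have hg : g ∈ π.invariants := fun x => by simp only [g, sameCycle_apply_right]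
    have := apply_eq_of_mem_invariants_mul_swap h (heq ▸ hg)
    simp [g, SameCycle.refl, sameCycle_comm.not.mp h] at this

theorem numCycles_mul_swap_lt [Fintype α] (h : ¬π.SameCycle s t) :
    numCycles (π * swap s t) < numCycles π :=
  Submodule.finrank_lt_finrank_of_lt (invariants_mul_swap_lt h)

end Swap

theorem not_sameCycle_of_mapsTo [Finite α] {π : Perm α} {S : Set α} (hS : Set.MapsTo π S S)
    {x y : α} (hx : x ∈ S) (hy : y ∉ S) : ¬π.SameCycle x y := fun h => by
  obtain ⟨i, -, rfl⟩ := h.exists_pow_eq'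
  exact hy (by simpa [coe_pow] using hS.iterate i hx)

end Equiv.Perm

theorem Fin.monotone_snoc_iff {α : Type*} [Preorder α] {k : ℕ} {p : Fin k → α} {b : α} :
    Monotone (Fin.snoc p b : Fin (k + 1) → α) ↔ Monotone p ∧ ∀ i, p i ≤ b := by
  refine ⟨fun h => ⟨fun i j hij => ?_, fun i => ?_⟩, fun ⟨hp, hb⟩ i j hij => ?_⟩
  · simpa using h (Fin.castSucc_le_castSucc_iff.mpr hij)
  · simpa using h (Fin.castSucc_lt_last i).le
  · induction j using Fin.lastCases with
    | last => induction i using Fin.lastCases <;> simp [hb]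
    | cast j =>
      induction i using Fin.lastCases with
      | last => exact absurd hij (not_le.mpr (Fin.castSucc_lt_last j))
      | cast i => simpa using hp (Fin.castSucc_le_castSucc_iff.mp hij)

section CompleteHomogeneous

variable {R : Type*} [Semiring R] {n : ℕ}

-- `h_k(f 0, …, f B)`, each monomial written with weakly increasing indices, as in `hEval`.
def hUpTo (f : Fin n → R) (k : ℕ) (B : Fin n) : R :=
  ∑ t ∈ Finset.univ.filter (fun t : Fin k → Fin n => Monotone t ∧ ∀ i, t i ≤ B),
    ((List.ofFn t).map f).prod

theorem hUpTo_zero (f : Fin n → R) (B : Fin n) : hUpTo f 0 B = 1 := by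
  rw [hUpTo, Finset.sum_eq_single_of_mem finZeroElim] <;>
    simp [Subsingleton.elim _ finZeroElim, Monotone]

theorem hUpTo_succ (f : Fin n → R) (k : ℕ) (B : Fin n) :
    hUpTo f (k + 1) B = ∑ b ∈ Finset.univ.filter (· ≤ B), hUpTo f k b * f b := by
  rw [hUpTo, Finset.sum_filter, ← (Fin.snocEquiv fun _ => Fin n).sum_comp,
    Fintype.sum_prod_type, Finset.sum_filter]
  refine Finset.sum_congr rfl fun b _ => ?_
  split_ifs with hb
  · rw [hUpTo, Finset.sum_filter, Finset.sum_mul]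
    refine Finset.sum_congr rfl fun p _ => ?_
    simp only [Fin.snocEquiv, Equiv.coe_fn_mk, Fin.monotone_snoc_iff, Fin.forall_fin_succ',
      Fin.snoc_castSucc, Fin.snoc_last, List.ofFn_succ', List.concat_eq_append, List.map_append,
      List.prod_append, List.map_cons, List.map_nil, List.prod_cons, List.prod_nil, mul_one]
    by_cases hp : Monotone p ∧ ∀ i, p i ≤ b
    · simp [hp, hb, fun i => (hp.2 i).trans hb]
    · simp [hp]
  · exact Finset.sum_eq_zero fun p _ =>
      if_neg fun h => hb (by simpa [Fin.snocEquiv] using h.2 (Fin.last k))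

end CompleteHomogeneous

section Coefficients

open Perm

variable {n : ℕ}

theorem coeff_hUpTo_zero (B : Fin n) (π : Perm (Fin n)) :
    (hUpTo (JM n) 0 B).coeff π = if π = 1 then 1 else 0 := by
  simp [hUpTo_zero, MonoidAlgebra.one_def, MonoidAlgebra.coeff_single, Finsupp.single_apply,
    eq_comm]

theorem coeff_hUpTo_succ (k : ℕ) (B : Fin n) (π : Perm (Fin n)) :
    (hUpTo (JM n) (k + 1) B).coeff π = ∑ b ∈ Finset.univ.filter (· ≤ B),
      ∑ s ∈ Finset.univ.filter (· < b), (hUpTo (JM n) k b).coeff (π * swap s b) := by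
  simp only [hUpTo_succ, JM, Finset.mul_sum, MonoidAlgebra.coeff_sum, Finsupp.finsetSum_apply,
    MonoidAlgebra.coeff_mul_single_apply, mul_one, swap_inv]

theorem coeff_hUpTo_eq_zero_of_lt_of_apply_ne {k : ℕ} {B x : Fin n} {π : Perm (Fin n)}
    (hB : B < x) (hx : π x ≠ x) : (hUpTo (JM n) k B).coeff π = 0 := by
  induction k generalizing B π with
  | zero => simp [coeff_hUpTo_zero, show π ≠ 1 by rintro rfl; exact hx rfl]
  | succ k ih =>
    rw [coeff_hUpTo_succ]
    refine Finset.sum_eq_zero fun b hb => Finset.sum_eq_zero fun s hs => ih ?_ ?_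
    · exact (Finset.mem_filter.mp hb).2.trans_lt hB
    · have hbx : b < x := (Finset.mem_filter.mp hb).2.trans_lt hB
      rwa [mul_apply, swap_apply_of_ne_of_ne ((Finset.mem_filter.mp hs).2.trans hbx).ne'
        hbx.ne']

theorem coeff_hUpTo_eq_zero_of_numCycles_add_lt {k : ℕ} {B : Fin n} {π : Perm (Fin n)}
    (h : π.numCycles + k < n) : (hUpTo (JM n) k B).coeff π = 0 := by
  induction k generalizing B π with
  | zero =>
    have : π ≠ 1 := by rintro rfl; simp [numCycles_one] at h
    simp [coeff_hUpTo_zero, this]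
  | succ k ih =>
    rw [coeff_hUpTo_succ]
    refine Finset.sum_eq_zero fun b _ => Finset.sum_eq_zero fun s _ => ih ?_
    have := numCycles_mul_swap_le_add_one π s b
    omega

theorem coeff_hUpTo_mul_swap_eq_zero {k : ℕ} {π : Perm (Fin n)} {s b : Fin n}
    (hπ : π.numCycles + (k + 1) ≤ n) (h : ¬π.SameCycle s b) (B : Fin n) :
    (hUpTo (JM n) k B).coeff (π * swap s b) = 0 :=
  coeff_hUpTo_eq_zero_of_numCycles_add_lt (by have := numCycles_mul_swap_lt h; omega)

end Coefficients

theorem List.induction_on_sum {P : List ℕ → Prop} (nil : P [])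
    (append_zero : ∀ l, P l → P (l ++ [0]))
    (append_succ : ∀ l m, (∀ l' : List ℕ, l'.sum = l.sum + m → P l') → P (l ++ [m + 1]))
    (l : List ℕ) : P l := by
  induction hk : l.sum using Nat.strong_induction_on generalizing l with
  | _ k ih =>
    induction l using List.reverseRecOn with
    | nil => exact nil
    | append_singleton l a ihl =>
      rcases a with _ | m
      · exact append_zero l (ihl (by simpa using hk))
      · exact append_succ l m fun l' hl' => ih _ (by simp at hk; omega) l' hl'

section Canonical

open Perm

variable {n : ℕ} (hn : 0 < n)

theorem cycleOn_zero (o : ℕ) : cycleOn n hn o 0 = 1 := rfl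

theorem cycleOn_apply_of_add_lt {o m : ℕ} {x : Fin n} (hx : o + m < x) :
    cycleOn n hn o m x = x := by
  refine List.formPerm_apply_of_notMem fun hmem => ?_
  obtain ⟨j, hj, rfl⟩ := List.mem_map.mp hmem
  have := Nat.mod_le (o + j) n
  simp only [List.mem_range] at hj
  simp only at hx
  omega

theorem val_cycleOn_apply {o m : ℕ} (h : o + m < n) (x : Fin n) :
    (cycleOn n hn o m x : ℕ) =
      if (x : ℕ) < o ∨ o + m < x then (x : ℕ)
      else if (x : ℕ) = o + m then o else x + 1 := by
  rw [cycleOn]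
  set L := (List.range (m + 1)).map (fun j => (⟨(o + j) % n, Nat.mod_lt _ hn⟩ : Fin n))
  have hlen : L.length = m + 1 := by simp [L]
  have hL : ∀ j (hj : j < L.length), (L[j] : ℕ) = o + j := fun j hj => by
    simp only [L, List.getElem_map, List.getElem_range]
    exact Nat.mod_eq_of_lt (by omega)
  have hnodup : L.Nodup := by
    refine List.nodup_iff_injective_get.mpr fun i j hij => Fin.ext ?_
    simpa [hL] using congrArg Fin.val hij
  split_ifs with hout hlast
  · refine congrArg Fin.val (List.formPerm_apply_of_notMem fun hmem => ?_)
    obtain ⟨j, hj, rfl⟩ := List.mem_iff_getElem.mp hmem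
    have := hL j hj
    omega
  · have hx : x = L[(x : ℕ) - o]'(by omega) := Fin.ext (by rw [hL]; omega)
    rw [hx, List.formPerm_apply_getElem _ hnodup, hL, hlen, show (x : ℕ) - o + 1 = m + 1 by omega,
      Nat.mod_self, add_zero]
  · have hx : x = L[(x : ℕ) - o]'(by omega) := Fin.ext (by rw [hL]; omega)
    rw [hx, List.formPerm_apply_getElem _ hnodup, hL, hL, hlen, Nat.mod_eq_of_lt (by omega)]
    omega

theorem cycleOn_mul_swap {o m : ℕ} (h : o + m + 1 < n) {j : ℕ} (hj : j ≤ m) :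
    cycleOn n hn o (m + 1) * swap ⟨o + j, by omega⟩ ⟨o + m + 1, h⟩ =
      cycleOn n hn o j * cycleOn n hn (o + j + 1) (m - j) := by
  ext x
  simp only [mul_apply, val_cycleOn_apply hn (show o + (m + 1) < n by omega),
    val_cycleOn_apply hn (show o + j < n by omega),
    val_cycleOn_apply hn (show o + j + 1 + (m - j) < n by omega), swap_apply_def, Fin.ext_iff]
  -- `dsimp` unfolds the values of the `Fin.mk` literals coming from the swap, which `omega` treats
  -- as atoms.
  split_ifs <;> (try dsimp only at *) <;> omega

theorem canonicalPermAux_append (o : ℕ) (l₁ l₂ : List ℕ) :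
    canonicalPermAux n hn o (l₁ ++ l₂) =
      canonicalPermAux n hn o l₁ * canonicalPermAux n hn (o + l₁.sum + l₁.length) l₂ := by
  induction l₁ generalizing o with
  | nil => simp [canonicalPermAux]
  | cons m l ih =>
    simp only [List.cons_append, canonicalPermAux, ih, mul_assoc, List.sum_cons, List.length_cons]
    congr 3
    omega

theorem canonicalPermAux_apply_of_le {o : ℕ} {l : List ℕ} {x : Fin n}
    (hx : o + l.sum + l.length ≤ x) : canonicalPermAux n hn o l x = x := by
  induction l generalizing o with
  | nil => rfl
  | cons m l ih =>
    simp only [List.sum_cons, List.length_cons] at hx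
    rw [canonicalPermAux, mul_apply, ih (by omega), cycleOn_apply_of_add_lt hn (by omega)]

theorem canonicalPerm_append_singleton (l : List ℕ) (m : ℕ) :
    canonicalPerm n hn (l ++ [m]) = canonicalPerm n hn l * cycleOn n hn (l.sum + l.length) m := by
  simp [canonicalPerm, canonicalPermAux_append, canonicalPermAux]

theorem canonicalPerm_append_zero (l : List ℕ) :
    canonicalPerm n hn (l ++ [0]) = canonicalPerm n hn l := by
  rw [canonicalPerm_append_singleton, cycleOn_zero, mul_one]

theorem val_canonicalPerm_append_apply {l : List ℕ} {m : ℕ} (h : l.sum + l.length + m < n)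
    {x : Fin n} (hx : l.sum + l.length ≤ x) :
    (canonicalPerm n hn (l ++ [m]) x : ℕ) =
      if l.sum + l.length + m < x then (x : ℕ)
      else if (x : ℕ) = l.sum + l.length + m then l.sum + l.length else x + 1 := by
  have hcyc := val_cycleOn_apply hn h x
  rw [canonicalPerm_append_singleton, mul_apply, canonicalPerm,
    canonicalPermAux_apply_of_le hn (by split_ifs at hcyc <;> omega), hcyc]
  split_ifs <;> omega

theorem canonicalPerm_append_mul_swap {l : List ℕ} {m : ℕ} (h : l.sum + l.length + m + 1 < n)
    {j : ℕ} (hj : j ≤ m) :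
    canonicalPerm n hn (l ++ [m + 1]) *
        swap ⟨l.sum + l.length + j, by omega⟩ ⟨l.sum + l.length + m + 1, h⟩ =
      canonicalPerm n hn (l ++ [j, m - j]) := by
  rw [canonicalPerm_append_singleton, mul_assoc, cycleOn_mul_swap hn h hj, canonicalPerm,
    canonicalPerm, canonicalPermAux_append]
  simp [canonicalPermAux]

theorem numCycles_canonicalPerm_add_sum_le (l : List ℕ) (h : l.sum + l.length ≤ n) :
    (canonicalPerm n hn l).numCycles + l.sum ≤ n := by
  induction l using List.induction_on_sum with
  | nil => simp [canonicalPerm, canonicalPermAux, numCycles_one]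
  | append_zero l ih =>
    rw [canonicalPerm_append_zero]
    simpa using ih (by simp at h; omega)
  | append_succ l m ih =>
    simp only [List.sum_append, List.length_append, List.sum_singleton,
      List.length_singleton] at h ⊢
    set s : Fin n := ⟨l.sum + l.length + m, by omega⟩
    set M : Fin n := ⟨l.sum + l.length + m + 1, by omega⟩
    have hsplit := canonicalPerm_append_mul_swap hn (l := l) (m := m) (by omega) le_rfl
    rw [Nat.sub_self, show l ++ [m, 0] = l ++ [m] ++ [0] by simp, canonicalPerm_append_zero]
      at hsplit
    have hσ : canonicalPerm n hn (l ++ [m + 1]) = canonicalPerm n hn (l ++ [m]) * swap s M := by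
      rw [← hsplit, mul_assoc, swap_mul_self, mul_one]
    have hfix : canonicalPerm n hn (l ++ [m]) M = M :=
      canonicalPermAux_apply_of_le hn (by simp [M]; omega)
    have hsM : s ≠ M := Fin.ne_of_val_ne (by simp [s, M])
    have hlt := numCycles_mul_swap_lt fun hsame => hsM (hsame.eq_of_right hfix)
    have := ih (l ++ [m]) (by simp) (by simp; omega)
    simp only [List.sum_append, List.sum_singleton] at this
    rw [hσ]
    omega

theorem coeff_hUpTo_canonicalPerm_mul_swap_eq_zero {l : List ℕ} {m : ℕ}
    (h : l.sum + l.length + m + 1 < n) {s b : Fin n} (hsb : s < b)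
    (hb : (b : ℕ) ≠ l.sum + l.length + m + 1 ∨ (s : ℕ) < l.sum + l.length) :
    (hUpTo (JM n) (l.sum + m) b).coeff (canonicalPerm n hn (l ++ [m + 1]) * swap s b) = 0 := by
  set σ := canonicalPerm n hn (l ++ [m + 1])
  have hσ : ∀ x : Fin n, l.sum + l.length ≤ x → (σ x : ℕ) = _ := fun x hx =>
    val_canonicalPerm_append_apply hn (m := m + 1) (by omega) hx
  have hrank : σ.numCycles + (l.sum + m + 1) ≤ n := by
    simpa [add_assoc] using numCycles_canonicalPerm_add_sum_le hn (l ++ [m + 1]) (by simp; omega)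
  rcases lt_trichotomy (b : ℕ) (l.sum + l.length + m + 1) with hbM | hbM | hbM
  · set M : Fin n := ⟨l.sum + l.length + m + 1, h⟩
    refine coeff_hUpTo_eq_zero_of_lt_of_apply_ne (x := M) hbM fun hfix => ?_
    rw [mul_apply, swap_apply_of_ne_of_ne (Fin.ne_of_val_ne (by simp [M]; omega))
      (Fin.ne_of_val_ne (by simp [M]; omega))] at hfix
    have := hσ M (by simp [M]; omega)
    simp only [hfix, M] at this
    split_ifs at this <;> omega
  · refine coeff_hUpTo_mul_swap_eq_zero hrank (fun hsame => ?_) b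
    let block : Set (Fin n) :=
      {x | l.sum + l.length ≤ x ∧ (x : ℕ) ≤ l.sum + l.length + m + 1}
    have hS : Set.MapsTo σ block block := fun x ⟨h1, h2⟩ => by
      have := hσ x h1
      constructor <;> split_ifs at this <;> omega
    exact not_sameCycle_of_mapsTo hS (x := b) (by simp only [block, Set.mem_ofPred_eq]; omega)
      (by simp only [block, Set.mem_ofPred_eq]; omega) hsame.symm
  · refine coeff_hUpTo_mul_swap_eq_zero hrank (fun hsame => hsb.ne (hsame.eq_of_right ?_)) b
    exact canonicalPermAux_apply_of_le hn (by simp; omega)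

theorem coeff_hUpTo_succ_canonicalPerm_append {l : List ℕ} {m : ℕ} {B : Fin n}
    (hB : l.sum + l.length + m + 1 ≤ B) :
    (hUpTo (JM n) (l.sum + m + 1) B).coeff (canonicalPerm n hn (l ++ [m + 1])) =
      ∑ j : Fin (m + 1), (hUpTo (JM n) (l.sum + m) ⟨l.sum + l.length + m + 1, by omega⟩).coeff
        (canonicalPerm n hn (l ++ [m + 1]) *
          swap ⟨l.sum + l.length + j, by omega⟩ ⟨l.sum + l.length + m + 1, by omega⟩) := by
  set o := l.sum + l.length
  set M : Fin n := ⟨o + m + 1, by omega⟩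
  let e : Fin (m + 1) → Fin n := fun j => ⟨o + j, by omega⟩
  have hMB : M ≤ B := Fin.le_def.mpr (by simp [M]; omega)
  have hblock : Finset.univ.image e ⊆ Finset.univ.filter (· < M) := by
    intro s hs
    obtain ⟨j, -, rfl⟩ := Finset.mem_image.mp hs
    simpa [e, M, Fin.lt_def] using j.2
  have hbelow (s : Fin n) (hs : s < M) (hse : s ∉ Finset.univ.image e) : (s : ℕ) < o := by
    by_contra hos
    exact hse (Finset.mem_image.mpr ⟨⟨s - o, by rw [Fin.lt_def] at hs; simp [M] at hs; omega⟩,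
      Finset.mem_univ _, Fin.ext (by simp [e]; omega)⟩)
  rw [coeff_hUpTo_succ, Finset.sum_eq_single_of_mem M (by simpa using hMB)
      fun b _ hbM => Finset.sum_eq_zero fun s hs =>
        coeff_hUpTo_canonicalPerm_mul_swap_eq_zero hn (by omega) (Finset.mem_filter.mp hs).2
          (Or.inl fun h => hbM (Fin.ext h)),
    ← Finset.sum_subset hblock fun s hs hse =>
      coeff_hUpTo_canonicalPerm_mul_swap_eq_zero hn (by omega) (Finset.mem_filter.mp hs).2
        (Or.inr (hbelow s (Finset.mem_filter.mp hs).2 hse)),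
    Finset.sum_image fun i _ j _ hij => Fin.ext (by simpa [e] using hij)]

theorem coeff_hUpTo_canonicalPerm (l : List ℕ) (B : Fin n) (hB : l.sum + l.length ≤ B + 1) :
    (hUpTo (JM n) l.sum B).coeff (canonicalPerm n hn l) = (((l.map catalan).prod : ℕ) : ℚ) := by
  induction l using List.induction_on_sum generalizing B with
  | nil => simp [coeff_hUpTo_zero, canonicalPerm, canonicalPermAux]
  | append_zero l ih =>
    simpa [canonicalPerm_append_zero, catalan_zero] using ih B (by simp at hB; omega)
  | append_succ l m ih =>
    simp only [List.sum_append, List.length_append, List.sum_singleton,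
      List.length_singleton] at hB
    set o := l.sum + l.length
    have hsplit (j : ℕ) (hj : j ≤ m) :
        (hUpTo (JM n) (l.sum + m) ⟨o + m + 1, by omega⟩).coeff
          (canonicalPerm n hn (l ++ [m + 1]) *
            swap ⟨o + j, by omega⟩ ⟨o + m + 1, by omega⟩) =
          (((l.map catalan).prod * (catalan j * catalan (m - j)) : ℕ) : ℚ) := by
      have hsum : (l ++ [j, m - j]).sum = l.sum + m := by simp; omega
      rw [canonicalPerm_append_mul_swap hn (by omega) hj, ← hsum,
        ih _ hsum _ (by simp; omega)]
      simp
    rw [show (l ++ [m + 1]).sum = l.sum + m + 1 by simp; omega,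
      coeff_hUpTo_succ_canonicalPerm_append hn (by omega),
      Finset.sum_congr rfl fun (j : Fin (m + 1)) _ => hsplit j j.is_le]
    simp only [List.map_append, List.prod_append, List.map_singleton, List.prod_singleton,
      catalan_succ, Finset.mul_sum]
    push_cast
    rfl

end Canonical

theorem hEval_eq_hUpTo {n : ℕ} (hn : 0 < n) (k : ℕ) :
    hEval n k = hUpTo (JM n) k ⟨n - 1, by omega⟩ := by
  refine Finset.sum_congr (Finset.filter_congr fun t _ => ?_) fun _ _ => rfl
  exact (and_iff_left_of_imp fun _ i => Fin.le_def.mpr (by simp; omega)).symm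

theorem top_class_coefficient_complete_general (n k : ℕ) (hn : 0 < n)
    (mu : List ℕ)
    (hk : mu.sum = k) (hwt : mu.sum + mu.length ≤ n) :
    (hEval n k).coeff (canonicalPerm n hn mu) = (((mu.map catalan).prod : ℕ) : ℚ) := by
  subst hk
  rw [hEval_eq_hUpTo hn]
  exact coeff_hUpTo_canonicalPerm hn mu _ (by simp; omega)

/-- Top class coefficients of complete homogeneous symmetric functions in Jucys–Murphy
elements: for a partition `μ` with `|μ| = k` and any `n ≥ wt(μ)`, the coefficient of the
canonical permutation `σ_μ` in `h_k(J_1,…,J_n)` equals `∏ᵢ Cat_{μᵢ}`; in particular it is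
independent of `n`. -/
theorem top_class_coefficient_complete (n k : ℕ) (hn : 0 < n)
    (mu : List ℕ) (hmu : ∀ x ∈ mu, 0 < x) (hsort : mu.Pairwise (· ≥ ·))
    (hk : mu.sum = k) (hwt : mu.sum + mu.length ≤ n) :
    (hEval n k).coeff (canonicalPerm n hn mu) = (((mu.map catalan).prod : ℕ) : ℚ) :=
  top_class_coefficient_complete_general n k hn mu hk hwt
end
end
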